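/- arXiv:2206.00958 — 12 statements merged into one kernel-verified Lean document; each statement's English description precedes it below -/
import Mathlib

section
/- For positive integers k, l: gcd(2^k + 1, 2^l - 1) = 1 if l/gcd(k,l) is odd, and gcd(2^k + 1, 2^l - 1) = 2^{gcd(k,l)} + 1 if l/gcd(k,l) is even. -/
/-- For positive integers k, l: gcd(2^k + 1, 2^l - 1) = 1 if l/gcd(k,l) is odd,
and gcd(2^k + 1, 2^l - 1) = 2^{gcd(k,l)} + 1 if l/gcd(k,l) is even. -/
theorem gcd_two_pow_add_one (k l : ℕ) (hk : 0 < k) (hl : 0 < l) :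
    (Odd (l / Nat.gcd k l) → Nat.gcd (2 ^ k + 1) (2 ^ l - 1) = 1) ∧
    (Even (l / Nat.gcd k l) → Nat.gcd (2 ^ k + 1) (2 ^ l - 1) = 2 ^ (Nat.gcd k l) + 1) := by
  set d := Nat.gcd k l with hd
  have hdpos : 0 < d := Nat.gcd_pos_of_pos_left _ hk
  set a := k / d with hadef
  set b := l / d with hbdef
  have hka : k = d * a := (Nat.mul_div_cancel' (Nat.gcd_dvd_left k l)).symm
  have hlb : l = d * b := (Nat.mul_div_cancel' (Nat.gcd_dvd_right k l)).symm
  have hab : Nat.Coprime a b := Nat.coprime_div_gcd_div_gcd hdpos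
  set g := Nat.gcd (2 ^ k + 1) (2 ^ l - 1) with hg
  have hgdvd1 : g ∣ 2 ^ k + 1 := Nat.gcd_dvd_left _ _
  have hgdvd2 : g ∣ 2 ^ l - 1 := Nat.gcd_dvd_right _ _
  have hgpos : 0 < g := Nat.gcd_pos_of_pos_left _ (by positivity)
  haveI : NeZero g := ⟨hgpos.ne'⟩
  have h1lek : (1 : ℕ) ≤ 2 ^ k := Nat.one_le_two_pow
  have h1lel : (1 : ℕ) ≤ 2 ^ l := Nat.one_le_two_pow
  have hlodd : Odd (2 ^ l - 1) := by
    have heven : Even (2 ^ l) := (Nat.even_pow).mpr ⟨even_two, hl.ne'⟩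
    exact Nat.Even.sub_odd h1lel heven odd_one
  have hgodd : Odd g := by
    rcases Nat.even_or_odd g with he | ho
    · exfalso
      have : (2 : ℕ) ∣ 2 ^ l - 1 := dvd_trans he.two_dvd hgdvd2
      rw [Nat.odd_iff] at hlodd
      omega
    · exact ho
  have h2k : (2 : ZMod g) ^ k = -1 := by
    have : ((2 ^ k + 1 : ℕ) : ZMod g) = 0 :=
      (ZMod.natCast_eq_zero_iff _ _).mpr hgdvd1
    push_cast at this
    linear_combination this
  have h2l : (2 : ZMod g) ^ l = 1 := by
    have : ((2 ^ l - 1 : ℕ) : ZMod g) = 0 :=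
      (ZMod.natCast_eq_zero_iff _ _).mpr hgdvd2
    rw [Nat.cast_sub h1lel] at this
    push_cast at this
    linear_combination this
  have hordl : orderOf (2 : ZMod g) ∣ l := orderOf_dvd_of_pow_eq_one h2l
  have hord2k : orderOf (2 : ZMod g) ∣ k * 2 := by
    apply orderOf_dvd_of_pow_eq_one
    rw [pow_mul, h2k]
    ring
  constructor
  · -- odd case
    intro hodd
    have hb : Odd b := hodd
    have hgcd2 : Nat.gcd (k * 2) l = d := by
      rw [hka, hlb, mul_assoc, Nat.gcd_mul_left]
      have h2b : Nat.Coprime 2 b := hb.coprime_two_left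
      rw [Nat.Coprime.gcd_mul_right_cancel a h2b, hab, mul_one]
    have hordd : orderOf (2 : ZMod g) ∣ d := by
      rw [← hgcd2]; exact Nat.dvd_gcd hord2k hordl
    have h2d : (2 : ZMod g) ^ d = 1 := orderOf_dvd_iff_pow_eq_one.mp hordd
    have h1 : (1 : ZMod g) = -1 := by
      rw [← h2k, hka, pow_mul, h2d, one_pow]
    have hg2 : g ∣ 2 := by
      have h2 : ((2 : ℕ) : ZMod g) = 0 := by
        push_cast
        linear_combination h1
      exact (ZMod.natCast_eq_zero_iff _ _).mp h2
    rcases (Nat.prime_two.eq_one_or_self_of_dvd g hg2) with h | h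
    · exact h
    · exfalso; rw [h] at hgodd; exact ((Nat.not_odd_iff_even.mpr even_two)) hgodd
  · -- even case
    intro heven
    obtain ⟨m, hm⟩ := heven
    have ha : Odd a := by
      rcases Nat.even_or_odd a with he | ho
      · exfalso
        have h2a : 2 ∣ a := he.two_dvd
        have h2b : 2 ∣ b := ⟨m, by omega⟩
        have := Nat.dvd_gcd h2a h2b
        rw [hab] at this
        omega
      · exact ho
    -- gcd (k*2) l = d * 2
    have ham : Nat.Coprime a m := by
      have : Nat.gcd a m ∣ Nat.gcd a b :=
        Nat.dvd_gcd (Nat.gcd_dvd_left _ _) ((Nat.gcd_dvd_right _ _).trans ⟨2, by omega⟩)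
      rw [hab] at this
      exact Nat.eq_one_of_dvd_one this
    have hgcd2 : Nat.gcd (k * 2) l = d * 2 := by
      rw [hka, hlb, mul_assoc, Nat.gcd_mul_left, hm]
      have : m + m = m * 2 := by ring
      rw [this, Nat.gcd_mul_right, ham]
    have hordd : orderOf (2 : ZMod g) ∣ d * 2 := by
      rw [← hgcd2]; exact Nat.dvd_gcd hord2k hordl
    have h2d2 : (2 : ZMod g) ^ (d * 2) = 1 := orderOf_dvd_iff_pow_eq_one.mp hordd
    have hgdvd : g ∣ 2 ^ (d * 2) - 1 := by
      apply (ZMod.natCast_eq_zero_iff _ _).mp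
      rw [Nat.cast_sub Nat.one_le_two_pow]
      push_cast
      simp [h2d2]
    have h1led : (1 : ℕ) ≤ 2 ^ d := Nat.one_le_two_pow
    obtain ⟨y, hy⟩ : ∃ y, 2 ^ d = y + 1 := ⟨2 ^ d - 1, by omega⟩
    have hfact : 2 ^ (d * 2) - 1 = (2 ^ d + 1) * (2 ^ d - 1) := by
      rw [pow_mul, sq, hy]
      have e1 : (y + 1) * (y + 1) = (y + 1 + 1) * y + 1 := by ring
      rw [e1, Nat.add_sub_cancel, Nat.add_sub_cancel]
    -- 2^d - 1 divides 2^k - 1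
    have hdk : (2 : ℕ) ^ d - 1 ∣ 2 ^ k - 1 := by
      have := Nat.sub_dvd_pow_sub_pow (2 ^ d) 1 a
      rwa [← pow_mul, one_pow, ← hka] at this
    have hco : Nat.Coprime g (2 ^ d - 1) := by
      set e := Nat.gcd g (2 ^ d - 1) with he
      have h1 : e ∣ 2 ^ k + 1 := (Nat.gcd_dvd_left _ _).trans hgdvd1
      have h2 : e ∣ 2 ^ k - 1 := (Nat.gcd_dvd_right _ _).trans hdk
      have h3 : e ∣ 2 := by
        have := Nat.dvd_sub h1 h2
        have hx : 2 ^ k + 1 - (2 ^ k - 1) = 2 := by omega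
        rwa [hx] at this
      rcases Nat.prime_two.eq_one_or_self_of_dvd e h3 with h | h
      · exact h
      · exfalso
        have : (2 : ℕ) ∣ g := h ▸ Nat.gcd_dvd_left _ _
        rw [Nat.odd_iff] at hgodd
        omega
    have hgd : g ∣ 2 ^ d + 1 := by
      apply hco.dvd_of_dvd_mul_right
      rwa [← hfact]
    have hdg : 2 ^ d + 1 ∣ g := by
      apply Nat.dvd_gcd
      · have := ha.nat_add_dvd_pow_add_pow (2 ^ d) 1
        rwa [← pow_mul, one_pow, ← hka] at this
      · have h1 : (2 : ℕ) ^ d + 1 ∣ 2 ^ (d * 2) - 1 := hfact ▸ Dvd.intro _ rfl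
        have h2 : (2 : ℕ) ^ (d * 2) - 1 ∣ 2 ^ l - 1 := by
          have := Nat.sub_dvd_pow_sub_pow (2 ^ (d * 2)) 1 m
          have hldm : d * 2 * m = l := by rw [hlb, hm]; ring
          rwa [← pow_mul, one_pow, hldm] at this
        exact h1.trans h2
    exact Nat.dvd_antisymm hgd hdg
end

section
/- For an odd prime p and positive integers k, l with l/gcd(k,l) odd, gcd(p^k + 1, p^l - 1) = 2. -/
/-- For an odd prime p and positive integers k, l with l/gcd(k,l) odd,
gcd(p^k + 1, p^l - 1) = 2. -/
theorem gcd_odd_prime_pow (p k l : ℕ) (hp : p.Prime) (hodd : Odd p)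
    (hk : 0 < k) (hl : 0 < l) (h : Odd (l / Nat.gcd k l)) :
    Nat.gcd (p ^ k + 1) (p ^ l - 1) = 2 := by
  set d := Nat.gcd (p ^ k + 1) (p ^ l - 1) with hd
  have hp2 : 2 ≤ p := hp.two_le
  have hpl1 : 1 ≤ p ^ l := Nat.one_le_pow _ _ (by omega)
  -- 2 divides d
  have h2k : 2 ∣ p ^ k + 1 := by
    obtain ⟨m, hm⟩ := hodd.pow (n := k)
    omega
  have h2l : 2 ∣ p ^ l - 1 := by
    obtain ⟨m, hm⟩ := hodd.pow (n := l)
    omega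
  have h2d : 2 ∣ d := Nat.dvd_gcd h2k h2l
  -- gcd (2k) l = gcd k l
  have hg : 0 < Nat.gcd k l := Nat.gcd_pos_of_pos_left _ hk
  set g := Nat.gcd k l with hgdef
  have hco : Nat.Coprime (k / g) (l / g) := Nat.coprime_div_gcd_div_gcd hg
  have hco2 : Nat.Coprime 2 (l / g) := h.coprime_two_left
  have hkg : g ∣ k := Nat.gcd_dvd_left k l
  have hlg : g ∣ l := Nat.gcd_dvd_right k l
  have hgcd2 : Nat.gcd (2 * k) l = g := by
    conv_lhs => rw [← Nat.div_mul_cancel hkg, ← Nat.div_mul_cancel hlg]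
    rw [← mul_assoc, Nat.gcd_mul_right]
    have : Nat.Coprime (2 * (k / g)) (l / g) := Nat.Coprime.mul hco2 hco
    rw [this, one_mul]
  -- work in ZMod d
  have hdpos : 0 < d := by
    apply Nat.gcd_pos_of_pos_left
    omega
  haveI : NeZero d := ⟨by omega⟩
  have hdk : d ∣ p ^ k + 1 := Nat.gcd_dvd_left _ _
  have hdl : d ∣ p ^ l - 1 := Nat.gcd_dvd_right _ _
  have hxk : (p : ZMod d) ^ k = -1 := by
    have : ((p ^ k + 1 : ℕ) : ZMod d) = 0 :=
      (ZMod.natCast_eq_zero_iff _ _).mpr hdk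
    push_cast at this
    linear_combination this
  have hxl : (p : ZMod d) ^ l = 1 := by
    have : ((p ^ l - 1 : ℕ) : ZMod d) = 0 :=
      (ZMod.natCast_eq_zero_iff _ _).mpr hdl
    rw [Nat.cast_sub hpl1] at this
    push_cast at this
    linear_combination this
  have hx2k : (p : ZMod d) ^ (2 * k) = 1 := by
    rw [mul_comm, pow_mul, hxk]; ring
  have hord : orderOf (p : ZMod d) ∣ g := by
    rw [← hgcd2]
    exact Nat.dvd_gcd (orderOf_dvd_of_pow_eq_one hx2k) (orderOf_dvd_of_pow_eq_one hxl)
  have hxk1 : (p : ZMod d) ^ k = 1 :=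
    orderOf_dvd_iff_pow_eq_one.mp (hord.trans hkg)
  have h21 : ((2 : ℕ) : ZMod d) = 0 := by
    push_cast
    rw [hxk1] at hxk
    linear_combination hxk
  have hd2 : d ∣ 2 := (ZMod.natCast_eq_zero_iff _ _).mp h21
  exact Nat.dvd_antisymm hd2 h2d
end

section
/- Let L = F_{p^l}, q = p^k with δ = gcd(k,l), and let f(x) = a x^{q+1} + b x^q + c x + d be a nonzero polynomial over L with a ≠ 0. Then the number of roots of f in L is 0, 1, 2, or p^δ + 1. -/
/-!
Write `σ` for the field endomorphism `x ↦ x ^ q`, so that `f x = a x σ(x) + b σ(x) + c x + d`.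
If `f` has three distinct roots `x₀, x₁, x₂`, then every polynomial of this shape vanishing at
them is proportional to `f` (eliminate `σ x` and count the roots of the resulting quadratic).
One such polynomial expresses that the cross-ratio `r(x)` of `x₀, x₁, x₂, x` is fixed by `σ`,
so `r` maps the roots other than `x₁` bijectively onto the fixed points of `σ`. In `𝔽_{p^l}`
the nonzero fixed points are the `(p^k - 1)`-th roots of unity in the cyclic group `𝔽_{p^l}ˣ`,
and there are `gcd(p^k - 1, p^l - 1) = p^δ - 1` of them.
-/

open Finset

theorem FiniteField.card_filter_pow_eq_self {K : Type*} [Field K] [Fintype K] [DecidableEq K]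
    {n : ℕ} (hn : n ≠ 0) :
    #{x : K | x ^ n = x} = (Fintype.card K - 1).gcd (n - 1) + 1 := by
  have hpow : ∀ x : K, x ^ n = x ^ (n - 1) * x := fun x => by
    rw [← pow_succ, Nat.sub_add_cancel (Nat.one_le_iff_ne_zero.mpr hn)]
  have hunits : #{u : Kˣ | u ^ (n - 1) = 1} = (Fintype.card K - 1).gcd (n - 1) := by
    rw [← Fintype.card_units, ← Nat.card_eq_fintype_card, ← IsCyclic.card_powMonoidHom_ker,
      ← Fintype.card_subtype, ← Nat.card_eq_fintype_card]
    exact Nat.card_congr (Equiv.subtypeEquivRight fun _ => Iff.rfl)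
  have hsplit : ({x : K | x ^ n = x} : Finset K) =
      insert 0 (({u : Kˣ | u ^ (n - 1) = 1} : Finset Kˣ).map ⟨Units.val, Units.val_injective⟩) := by
    ext x
    rcases eq_or_ne x 0 with rfl | hx
    · simp [zero_pow hn]
    · simp only [mem_filter_univ, mem_insert, hx, false_or, mem_map]
      constructor
      · intro h
        refine ⟨Units.mk0 x hx, Units.ext ?_, rfl⟩
        simpa [hpow, hx] using h
      · rintro ⟨u, hu, rfl⟩
        simp [hpow, ← Units.val_pow_eq_pow_val, hu]
  rw [hsplit, card_insert_of_notMem (by simp), card_map, hunits]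

theorem FiniteField.card_filter_iterateFrobenius_eq_self {K : Type*} [Field K] [Fintype K]
    [DecidableEq K] {p l : ℕ} [ExpChar K p] (hcard : Fintype.card K = p ^ l) (k : ℕ) :
    #{y : K | iterateFrobenius K p k y = y} = p ^ Nat.gcd k l := by
  have hp := expChar_pos K p
  calc #{y : K | iterateFrobenius K p k y = y} = #{y : K | y ^ p ^ k = y} := by
        simp only [iterateFrobenius_def]; congr
    _ = p ^ Nat.gcd k l := by
        rw [card_filter_pow_eq_self (pow_pos hp k).ne', hcard, Nat.pow_sub_one_gcd_pow_sub_one,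
          Nat.gcd_comm, Nat.sub_add_cancel (Nat.one_le_pow _ _ hp)]

section Projective

variable {L : Type*} [Field L] (σ : L →+* L)

/-- For `σ x = x ^ q` this is the `q`-projective polynomial `a x^(q+1) + b x^q + c x + d`. -/
def projectivePoly (a b c d x : L) : L := a * σ x * x + b * σ x + c * x + d

/-- The Möbius transformation sending `x₀, x₁, x₂` to `0, ∞, 1`. -/
def crossRatio (x₀ x₁ x₂ x : L) : L := (x - x₀) * (x₂ - x₁) / ((x - x₁) * (x₂ - x₀))

variable {σ}

lemma map_crossRatio (x₀ x₁ x₂ x : L) :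
    σ (crossRatio x₀ x₁ x₂ x) = crossRatio (σ x₀) (σ x₁) (σ x₂) (σ x) := by
  simp only [crossRatio, map_div₀, map_mul, map_sub]

lemma leadingCoeff_eq_zero_of_three_roots {A₂ A₁ A₀ x₀ x₁ x₂ : L}
    (h₀₁ : x₀ ≠ x₁) (h₀₂ : x₀ ≠ x₂) (h₁₂ : x₁ ≠ x₂)
    (e₀ : A₂ * x₀ ^ 2 + A₁ * x₀ + A₀ = 0) (e₁ : A₂ * x₁ ^ 2 + A₁ * x₁ + A₀ = 0)
    (e₂ : A₂ * x₂ ^ 2 + A₁ * x₂ + A₀ = 0) : A₂ = 0 := by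
  have h₁ : A₂ * (x₀ + x₁) + A₁ = 0 := by
    refine (mul_eq_zero.mp ?_).resolve_left (sub_ne_zero.mpr h₀₁)
    linear_combination e₀ - e₁
  have h₂ : A₂ * (x₀ + x₂) + A₁ = 0 := by
    refine (mul_eq_zero.mp ?_).resolve_left (sub_ne_zero.mpr h₀₂)
    linear_combination e₀ - e₂
  refine (mul_eq_zero.mp ?_).resolve_left (sub_ne_zero.mpr h₁₂)
  linear_combination h₁ - h₂

lemma coeffs_proportional_of_three_roots {a b c d α β γ ε x₀ x₁ x₂ : L} (ha : a ≠ 0)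
    (h₀₁ : x₀ ≠ x₁) (h₀₂ : x₀ ≠ x₂) (h₁₂ : x₁ ≠ x₂)
    (hf₀ : projectivePoly σ a b c d x₀ = 0) (hf₁ : projectivePoly σ a b c d x₁ = 0)
    (hf₂ : projectivePoly σ a b c d x₂ = 0)
    (hg₀ : projectivePoly σ α β γ ε x₀ = 0) (hg₁ : projectivePoly σ α β γ ε x₁ = 0)
    (hg₂ : projectivePoly σ α β γ ε x₂ = 0) :
    a * β = α * b ∧ a * γ = α * c ∧ a * ε = α * d := by
  unfold projectivePoly at *
  set β' := a * β - α * b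
  set γ' := a * γ - α * c
  set ε' := a * ε - α * d
  -- `a g - α f` has no `x σ x` term; eliminating `σ x` between it and `f` leaves a quadratic.
  have hh₀ : β' * σ x₀ + γ' * x₀ + ε' = 0 := by linear_combination a * hg₀ - α * hf₀
  have hh₁ : β' * σ x₁ + γ' * x₁ + ε' = 0 := by linear_combination a * hg₁ - α * hf₁
  have hh₂ : β' * σ x₂ + γ' * x₂ + ε' = 0 := by linear_combination a * hg₂ - α * hf₂
  have hγ' : γ' = 0 := by
    refine (mul_eq_zero.mp (neg_eq_zero.mp (leadingCoeff_eq_zero_of_three_roots h₀₁ h₀₂ h₁₂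
      (A₁ := β' * c - a * ε' - b * γ') (A₀ := β' * d - b * ε') ?_ ?_ ?_))).resolve_left ha
    · linear_combination β' * hf₀ - (a * x₀ + b) * hh₀
    · linear_combination β' * hf₁ - (a * x₁ + b) * hh₁
    · linear_combination β' * hf₂ - (a * x₂ + b) * hh₂
  have hβ' : β' = 0 := by
    refine (mul_eq_zero.mp ?_).resolve_right (sub_ne_zero.mpr (σ.injective.ne h₀₁))
    linear_combination hh₀ - hh₁ - (x₀ - x₁) * hγ'
  have hε' : ε' = 0 := by linear_combination hh₀ - σ x₀ * hβ' - x₀ * hγ'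
  exact ⟨sub_eq_zero.mp hβ', sub_eq_zero.mp hγ', sub_eq_zero.mp hε'⟩

/-- `(x₂ - x₁) / (x₂ - x₀)` is the value of `crossRatio x₀ x₁ x₂` at `∞`. -/
theorem projectivePoly_eq_zero_iff_of_three_roots {a b c d x₀ x₁ x₂ : L} (ha : a ≠ 0)
    (h₀₁ : x₀ ≠ x₁) (h₀₂ : x₀ ≠ x₂) (h₁₂ : x₁ ≠ x₂)
    (hf₀ : projectivePoly σ a b c d x₀ = 0) (hf₁ : projectivePoly σ a b c d x₁ = 0)
    (hf₂ : projectivePoly σ a b c d x₂ = 0) :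
    σ ((x₂ - x₁) / (x₂ - x₀)) ≠ (x₂ - x₁) / (x₂ - x₀) ∧
      ∀ x ≠ x₁, projectivePoly σ a b c d x = 0 ↔
        σ (crossRatio x₀ x₁ x₂ x) = crossRatio x₀ x₁ x₂ x := by
  have hσ₀₂ := σ.injective.ne h₀₂
  have hσ₁₂ := σ.injective.ne h₁₂
  set A := (σ x₂ - σ x₁) * (x₂ - x₀)
  set C := (x₂ - x₁) * (σ x₂ - σ x₀)
  have hA : A ≠ 0 := mul_ne_zero (sub_ne_zero.mpr hσ₁₂.symm) (sub_ne_zero.mpr h₀₂.symm)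
  have hB : ∀ x, projectivePoly σ (A - C) (x₀ * C - x₁ * A) (σ x₁ * C - σ x₀ * A)
      (σ x₀ * x₁ * A - σ x₁ * x₀ * C) x =
        (σ x - σ x₀) * (x - x₁) * A - (σ x - σ x₁) * (x - x₀) * C := fun x => by
    unfold projectivePoly; ring
  obtain ⟨hβ, hγ, hε⟩ := coeffs_proportional_of_three_roots ha h₀₁ h₀₂ h₁₂ hf₀ hf₁ hf₂
    (by rw [hB]; ring) (by rw [hB]; ring) (by rw [hB]; ring)
  have hAC : A - C ≠ 0 := by
    intro h
    refine mul_ne_zero ha (mul_ne_zero (sub_ne_zero.mpr h₀₁) hA) ?_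
    linear_combination hβ + (b + a * x₀) * h
  refine ⟨?_, fun x hx => ?_⟩
  · rw [map_div₀, map_sub, map_sub, Ne, div_eq_div_iff (sub_ne_zero.mpr hσ₀₂.symm)
      (sub_ne_zero.mpr h₀₂.symm), ← sub_eq_zero]
    convert hAC using 1
  · have hfB : a * ((σ x - σ x₀) * (x - x₁) * A - (σ x - σ x₁) * (x - x₀) * C) =
        (A - C) * projectivePoly σ a b c d x := by
      rw [← hB]; unfold projectivePoly
      linear_combination σ x * hβ + x * hγ + hε
    calc projectivePoly σ a b c d x = 0
        ↔ a * ((σ x - σ x₀) * (x - x₁) * A - (σ x - σ x₁) * (x - x₀) * C) = 0 := by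
          rw [hfB, mul_eq_zero, or_iff_right hAC]
      _ ↔ (σ x - σ x₀) * (x - x₁) * A - (σ x - σ x₁) * (x - x₀) * C = 0 := by
          rw [mul_eq_zero, or_iff_right ha]
      _ ↔ σ (crossRatio x₀ x₁ x₂ x) = crossRatio x₀ x₁ x₂ x := by
          rw [map_crossRatio, crossRatio, crossRatio, div_eq_div_iff
            (mul_ne_zero (sub_ne_zero.mpr (σ.injective.ne hx)) (sub_ne_zero.mpr hσ₀₂.symm))
            (mul_ne_zero (sub_ne_zero.mpr hx) (sub_ne_zero.mpr h₀₂.symm))]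
          constructor <;> intro h <;> linear_combination h

lemma crossRatio_injOn {x₀ x₁ x₂ : L} (h₀₁ : x₀ ≠ x₁) (h₀₂ : x₀ ≠ x₂) (h₁₂ : x₁ ≠ x₂) :
    Set.InjOn (crossRatio x₀ x₁ x₂) {x₁}ᶜ := by
  intro x hx x' hx' h
  have h₂₀ : x₂ - x₀ ≠ 0 := sub_ne_zero.mpr h₀₂.symm
  rw [crossRatio, crossRatio, div_eq_div_iff (mul_ne_zero (sub_ne_zero.mpr hx) h₂₀)
    (mul_ne_zero (sub_ne_zero.mpr hx') h₂₀)] at h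
  have : (x - x') * ((x₀ - x₁) * ((x₂ - x₁) * (x₂ - x₀))) = 0 := by linear_combination h
  exact sub_eq_zero.mp ((mul_eq_zero.mp this).resolve_right
    (mul_ne_zero (sub_ne_zero.mpr h₀₁) (mul_ne_zero (sub_ne_zero.mpr h₁₂.symm) h₂₀)))

lemma exists_crossRatio_eq {x₀ x₁ x₂ y : L} (h₀₁ : x₀ ≠ x₁) (h₀₂ : x₀ ≠ x₂) (h₁₂ : x₁ ≠ x₂)
    (hy : y ≠ (x₂ - x₁) / (x₂ - x₀)) : ∃ x ≠ x₁, crossRatio x₀ x₁ x₂ x = y := by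
  have h₂₀ : x₂ - x₀ ≠ 0 := sub_ne_zero.mpr h₀₂.symm
  have hD : (x₂ - x₀) * y - (x₂ - x₁) ≠ 0 := by
    rwa [Ne, sub_eq_zero, mul_comm, ← eq_div_iff h₂₀]
  obtain ⟨x, hx⟩ : ∃ x, x * ((x₂ - x₀) * y - (x₂ - x₁)) = x₁ * (x₂ - x₀) * y - x₀ * (x₂ - x₁) :=
    ⟨_, div_mul_cancel₀ _ hD⟩
  have hx₁ : x ≠ x₁ := by
    rintro rfl
    refine mul_ne_zero (sub_ne_zero.mpr h₀₁.symm) (sub_ne_zero.mpr h₁₂.symm) ?_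
    linear_combination -hx
  refine ⟨x, hx₁, ?_⟩
  rw [crossRatio, div_eq_iff (mul_ne_zero (sub_ne_zero.mpr hx₁) h₂₀)]
  linear_combination -hx

theorem card_roots_projectivePoly [Fintype L] [DecidableEq L] {a b c d : L} (ha : a ≠ 0)
    (h : 2 < #{x | projectivePoly σ a b c d x = 0}) :
    #{x | projectivePoly σ a b c d x = 0} = #{y | σ y = y} + 1 := by
  obtain ⟨x₀, hx₀, x₁, hx₁, x₂, hx₂, h₀₁, h₀₂, h₁₂⟩ := two_lt_card.mp h
  rw [← card_erase_add_one hx₁]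
  rw [mem_filter_univ] at hx₀ hx₁ hx₂
  obtain ⟨hν, hroots⟩ := projectivePoly_eq_zero_iff_of_three_roots ha h₀₁ h₀₂ h₁₂ hx₀ hx₁ hx₂
  congr 1
  refine card_nbij (crossRatio x₀ x₁ x₂) (fun x hx => ?_)
    ((crossRatio_injOn h₀₁ h₀₂ h₁₂).mono fun x hx => (mem_erase.mp hx).1) (fun y hy => ?_)
  · simp only [coe_erase, coe_filter, mem_univ, true_and, Set.mem_sdiff, Set.mem_ofPred_eq,
      Set.mem_singleton_iff] at hx ⊢
    exact (hroots x hx.2).mp hx.1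
  · simp only [coe_filter, mem_univ, true_and, Set.mem_ofPred_eq] at hy
    obtain ⟨x, hx, rfl⟩ := exists_crossRatio_eq h₀₁ h₀₂ h₁₂ fun h => hν (h ▸ hy)
    exact ⟨x, by simp [hx, (hroots x hx).mpr hy], rfl⟩

end Projective

theorem roots_of_projective_poly_general (p k l : ℕ) (hp : p.Prime)
    (L : Type) [Field L] [Fintype L] [DecidableEq L] (hcard : Fintype.card L = p ^ l)
    (a b c d : L) (ha : a ≠ 0) :
    (Finset.univ.filter fun x : L =>
        a * x ^ (p ^ k + 1) + b * x ^ (p ^ k) + c * x + d = 0).card ∈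
      ({0, 1, 2, p ^ Nat.gcd k l + 1} : Set ℕ) := by
  have : Fact p.Prime := ⟨hp⟩
  have : CharP L p := charP_of_card_eq_prime_pow hcard
  have hf : ∀ x : L, a * x ^ (p ^ k + 1) + b * x ^ (p ^ k) + c * x + d =
      projectivePoly (iterateFrobenius L p k) a b c d x := fun x => by
    rw [projectivePoly, iterateFrobenius_def, pow_succ, mul_assoc]
  simp only [hf]
  by_cases h : 2 < #{x | projectivePoly (iterateFrobenius L p k) a b c d x = 0}
  · rw [card_roots_projectivePoly ha h,
      FiniteField.card_filter_iterateFrobenius_eq_self hcard]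
    simp
  · simp only [Set.mem_insert_iff, Set.mem_singleton_iff]
    omega

/-- Let L = F_{p^l}, q = p^k, δ = gcd(k,l) and f(x) = a x^{q+1} + b x^q + c x + d
with a ≠ 0. Then the number of roots of f in L is 0, 1, 2, or p^δ + 1. -/
theorem roots_of_projective_poly (p k l : ℕ) (hp : p.Prime) (hk : 0 < k) (hl : 0 < l)
    (L : Type) [Field L] [Fintype L] [DecidableEq L] (hcard : Fintype.card L = p ^ l)
    (a b c d : L) (ha : a ≠ 0) :
    (Finset.univ.filter fun x : L =>
        a * x ^ (p ^ k + 1) + b * x ^ (p ^ k) + c * x + d = 0).card ∈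
      ({0, 1, 2, p ^ Nat.gcd k l + 1} : Set ℕ) :=
  roots_of_projective_poly_general p k l hp L hcard a b c d ha
end

section
/- Let L = F_{2^l}, q = 2^k with gcd(k,l) = 1, and let P_b(x) = x^{q+1} + x + b for b ∈ L. Then P_b has exactly two roots in L if and only if b = 0. -/
/-!
If `x` is a root of `P_b`, then `x + v⁻¹` is another root exactly when
`((x + 1) v) ^ q + x v = 1`, and the left-hand side is additive in `v`. For `b ≠ 0` the root `x` is
neither `0` nor `1`, and since `gcd (q - 1, 2 ^ l - 1) = 2 ^ gcd (k, l) - 1 = 1` this additive map has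
a nonzero kernel element `v₀`; so a second root, given by some `v`, yields a third one, given by
`v + v₀`. For `b = 0` the polynomial is `x (x + 1) ^ q`, with roots `0` and `1` only.
-/

theorem FiniteField.exists_ne_zero_mul_pow_eq_mul {K : Type*} [Field K] [Finite K] {n : ℕ}
    (hn : 0 < n) (hcop : (n - 1).Coprime (Nat.card K - 1)) {a c : K} (ha : a ≠ 0)
    (hc : c ≠ 0) : ∃ v ≠ 0, a * v ^ n = c * v := by
  have hcop' : (Nat.card Kˣ).Coprime (n - 1) := by rwa [Nat.card_units, Nat.coprime_comm]
  set v := (powCoprime hcop').symm (Units.mk0 (c / a) (div_ne_zero hc ha))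
  have hv : v ^ (n - 1) = Units.mk0 (c / a) (div_ne_zero hc ha) :=
    (powCoprime hcop').apply_symm_apply _
  refine ⟨v, v.ne_zero, ?_⟩
  rw [← Nat.sub_add_cancel hn, pow_succ, ← Units.val_pow_eq_pow_val, hv, Units.val_mk0]
  field_simp

namespace CharTwo

variable {F : Type*} [Field F] [CharP F 2]

theorem pow_two_pow_add_one_add_self (k : ℕ) (x : F) :
    x ^ (2 ^ k + 1) + x = x * (x + 1) ^ 2 ^ k := by
  rw [add_pow_char_pow, one_pow]
  ring

theorem pow_two_pow_add_one_add_self_eq_zero_iff {k : ℕ} {x : F} :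
    x ^ (2 ^ k + 1) + x = 0 ↔ x = 0 ∨ x = 1 := by
  rw [pow_two_pow_add_one_add_self, mul_eq_zero, pow_eq_zero_iff (by positivity),
    CharTwo.add_eq_zero]

theorem pow_two_pow_add_one_add_add_inv (k : ℕ) (b x : F) {v : F} (hv : v ≠ 0) :
    (x + v⁻¹) ^ (2 ^ k + 1) + (x + v⁻¹) + b =
      x ^ (2 ^ k + 1) + x + b + v⁻¹ ^ (2 ^ k + 1) * (((x + 1) * v) ^ 2 ^ k + x * v + 1) := by
  have h₁ : v⁻¹ * v = 1 := inv_mul_cancel₀ hv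
  have h₂ : v⁻¹ ^ 2 ^ k * v ^ 2 ^ k = 1 := by rw [← mul_pow, h₁, one_pow]
  rw [pow_succ, add_pow_char_pow, mul_pow, add_pow_char_pow, one_pow]
  linear_combination (-(v⁻¹ * (x ^ 2 ^ k + 1))) * h₂ - v⁻¹ ^ 2 ^ k * x * h₁

theorem isRoot_add_inv_iff {k : ℕ} {b x v : F} (hx : x ^ (2 ^ k + 1) + x + b = 0) (hv : v ≠ 0) :
    (x + v⁻¹) ^ (2 ^ k + 1) + (x + v⁻¹) + b = 0 ↔ ((x + 1) * v) ^ 2 ^ k + x * v = 1 := by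
  rw [pow_two_pow_add_one_add_add_inv k b x hv, hx, zero_add, mul_eq_zero,
    or_iff_right (pow_ne_zero _ (inv_ne_zero hv)), CharTwo.add_eq_zero]

theorem exists_third_root {k : ℕ} {b x₁ x₂ v₀ : F}
    (h₁ : x₁ ^ (2 ^ k + 1) + x₁ + b = 0) (h₂ : x₂ ^ (2 ^ k + 1) + x₂ + b = 0) (hne : x₁ ≠ x₂)
    (hv₀ : v₀ ≠ 0) (hker : (x₁ + 1) ^ 2 ^ k * v₀ ^ 2 ^ k = x₁ * v₀) :
    ∃ x₃, x₃ ^ (2 ^ k + 1) + x₃ + b = 0 ∧ x₃ ≠ x₁ ∧ x₃ ≠ x₂ := by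
  set v₁ := (x₂ - x₁)⁻¹
  have hv₁ : v₁ ≠ 0 := inv_ne_zero (sub_ne_zero.mpr hne.symm)
  have hx₂ : x₂ = x₁ + v₁⁻¹ := by rw [inv_inv, add_sub_cancel]
  have hA₁ : ((x₁ + 1) * v₁) ^ 2 ^ k + x₁ * v₁ = 1 := (isRoot_add_inv_iff h₁ hv₁).mp (hx₂ ▸ h₂)
  have hA₂ : ((x₁ + 1) * (v₁ + v₀)) ^ 2 ^ k + x₁ * (v₁ + v₀) = 1 := by
    rw [mul_add, add_pow_char_pow, mul_pow (x₁ + 1) v₀]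
    linear_combination hA₁ + hker + x₁ * v₀ * two_eq_zero (R := F)
  have hv₂ : v₁ + v₀ ≠ 0 := by
    rintro h
    simp [h] at hA₂
  refine ⟨x₁ + (v₁ + v₀)⁻¹, (isRoot_add_inv_iff h₁ hv₂).mpr hA₂, by simpa using hv₂, ?_⟩
  rw [hx₂, Ne, add_right_inj, inv_inj, add_eq_left]
  exact hv₀

theorem exists_ne_zero_mul_pow_two_pow_eq [Finite F] {k : ℕ}
    (hcop : (2 ^ k - 1).Coprime (Nat.card F - 1)) {b x : F} (hx : x ^ (2 ^ k + 1) + x + b = 0)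
    (hb : b ≠ 0) : ∃ v ≠ 0, (x + 1) ^ 2 ^ k * v ^ 2 ^ k = x * v := by
  have hx01 : ¬(x = 0 ∨ x = 1) := by
    rwa [← pow_two_pow_add_one_add_self_eq_zero_iff (k := k), CharTwo.add_eq_zero.mp hx]
  have hx1 : (x + 1) ^ 2 ^ k ≠ 0 := by
    rw [← CharTwo.sub_eq_add, pow_ne_zero_iff (by positivity), sub_ne_zero]
    exact fun h ↦ hx01 (.inr h)
  exact FiniteField.exists_ne_zero_mul_pow_eq_mul (Nat.two_pow_pos k) hcop hx1
    fun h ↦ hx01 (.inl h)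

end CharTwo

open CharTwo in
theorem two_roots_iff_b_zero_general (k l : ℕ)
    (hgcd : Nat.gcd k l = 1)
    (L : Type) [Field L] [Fintype L] [DecidableEq L] (hcard : Fintype.card L = 2 ^ l)
    (b : L) :
    (Finset.univ.filter fun x : L => x ^ (2 ^ k + 1) + x + b = 0).card = 2 ↔ b = 0 := by
  have : Fact (Nat.Prime 2) := ⟨Nat.prime_two⟩
  have : CharP L 2 := charP_of_card_eq_prime_pow hcard
  constructor
  · intro h2
    by_contra hb
    obtain ⟨x₁, hx₁, x₂, hx₂, hne⟩ := Finset.one_lt_card.mp (h2 ▸ one_lt_two)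
    simp only [Finset.mem_filter, Finset.mem_univ, true_and] at hx₁ hx₂
    have hcop : (2 ^ k - 1).Coprime (Nat.card L - 1) := by
      rw [Nat.card_eq_fintype_card, hcard, Nat.Coprime, Nat.pow_sub_one_gcd_pow_sub_one, hgcd,
        pow_one]
    obtain ⟨v₀, hv₀, hker⟩ := exists_ne_zero_mul_pow_two_pow_eq hcop hx₁ hb
    obtain ⟨x₃, hx₃, h₃₁, h₃₂⟩ := exists_third_root hx₁ hx₂ hne hv₀ hker
    refine h2.not_gt (Finset.two_lt_card.mpr ⟨x₁, ?_, x₂, ?_, x₃, ?_, hne, h₃₁.symm, h₃₂.symm⟩) <;>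
      simpa
  · rintro rfl
    have hroots : (Finset.univ.filter fun x : L => x ^ (2 ^ k + 1) + x + 0 = 0) = {0, 1} := by
      ext x
      simp [pow_two_pow_add_one_add_self_eq_zero_iff]
    rw [hroots, Finset.card_pair zero_ne_one]

/-- Let L = F_{2^l}, q = 2^k with gcd(k,l) = 1, and P_b(x) = x^{q+1} + x + b.
Then P_b has exactly two roots in L iff b = 0. -/
theorem two_roots_iff_b_zero (k l : ℕ) (hk : 0 < k) (hl : 0 < l)
    (hgcd : Nat.gcd k l = 1)
    (L : Type) [Field L] [Fintype L] [DecidableEq L] (hcard : Fintype.card L = 2 ^ l)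
    (b : L) :
    (Finset.univ.filter fun x : L => x ^ (2 ^ k + 1) + x + b = 0).card = 2 ↔ b = 0 :=
  two_roots_iff_b_zero_general k l hgcd L hcard b
end

section
/- Let L = F_{2^l}, q = 2^k with gcd(k,l) = 1. For each r ∈ L \ F_2, there is a unique h ∈ L \ F_2 with h^{q-1} = 1 + 1/r; equivalently r = h/(h + h^q). Moreover, with b = r^{q+1} + r, one has b = h^{q^2+1}/(h^q + h)^{q+1}. -/
/-!
Since `gcd(2^k - 1, 2^l - 1) = 2^gcd(k,l) - 1 = 1`, the map `x ↦ x^(q-1)` permutes the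
group `Lˣ` of order `2^l - 1`, so `1 + 1/r`, which is a unit different from `1`, has exactly one
`(q-1)`-th root `h`, and `h ≠ 1`. In characteristic 2, `h^q = (1 + 1/r) h` gives `h + h^q = h / r`,
and Frobenius gives `h^(q^2) = (1 + 1/r^q) h^q`; both formulas follow by substitution.
-/

theorem existsUnique_ne_zero_pow_eq {G₀ : Type*} [GroupWithZero G₀] {n : ℕ}
    (hn : (Nat.card G₀ - 1).Coprime n) {a : G₀} (ha : a ≠ 0) :
    ∃! x : G₀, x ≠ 0 ∧ x ^ n = a := by
  have hbij : Function.Bijective (· ^ n : G₀ˣ → G₀ˣ) :=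
    Nat.Coprime.pow_left_bijective (by rwa [Nat.card_units])
  obtain ⟨u, hu⟩ := hbij.2 (Units.mk0 a ha)
  refine ⟨u, ⟨u.ne_zero, by simpa using congrArg Units.val hu⟩, ?_⟩
  rintro x ⟨hx0, hx⟩
  have : Units.mk0 x hx0 ^ n = u ^ n := by
    rw [show u ^ n = Units.mk0 a ha from hu]
    exact Units.ext (by simpa using hx)
  simpa using congrArg Units.val (hbij.1 this)

section CharTwo

variable {L : Type*} [Field L] [CharP L 2] {k : ℕ} {r h : L}

theorem add_frobenius_eq_inv_mul (heq : h ^ 2 ^ k = (1 + r⁻¹) * h) :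
    h + h ^ 2 ^ k = r⁻¹ * h := by
  rw [heq, add_mul, one_mul, ← add_assoc, CharTwo.add_self_eq_zero, zero_add]

theorem pow_sq_add_one_eq (heq : h ^ 2 ^ k = (1 + r⁻¹) * h) :
    h ^ ((2 ^ k) ^ 2 + 1) = (1 + r⁻¹ ^ 2 ^ k) * h ^ (2 ^ k + 1) := by
  rw [sq, pow_succ, pow_mul, heq, mul_pow, add_pow_char_pow, one_pow, pow_succ, mul_assoc]

theorem eq_div_add_frobenius (hh : h ≠ 0) (hr : r ≠ 0) (heq : h ^ 2 ^ k = (1 + r⁻¹) * h) :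
    r = h / (h + h ^ 2 ^ k) := by
  rw [add_frobenius_eq_inv_mul heq]
  field_simp

theorem pow_add_one_add_eq (hh : h ≠ 0) (hr : r ≠ 0) (heq : h ^ 2 ^ k = (1 + r⁻¹) * h) :
    r ^ (2 ^ k + 1) + r = h ^ ((2 ^ k) ^ 2 + 1) / (h ^ 2 ^ k + h) ^ (2 ^ k + 1) := by
  rw [add_comm (h ^ 2 ^ k), add_frobenius_eq_inv_mul heq, pow_sq_add_one_eq heq, mul_pow,
    inv_pow, inv_pow]
  field_simp
  ring

end CharTwo

theorem unique_h_for_r_general (k l : ℕ) (hgcd : Nat.gcd k l = 1)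
    (L : Type) [Field L] [Fintype L] (hcard : Fintype.card L = 2 ^ l)
    (r : L) (hr0 : r ≠ 0) (hr1 : r ≠ 1) :
    (∃! h : L, (h ≠ 0 ∧ h ≠ 1) ∧ h ^ (2 ^ k - 1) = 1 + r⁻¹) ∧
    (∀ h : L, (h ≠ 0 ∧ h ≠ 1) → h ^ (2 ^ k - 1) = 1 + r⁻¹ →
      r = h / (h + h ^ (2 ^ k)) ∧
      r ^ (2 ^ k + 1) + r =
        h ^ ((2 ^ k) ^ 2 + 1) / (h ^ (2 ^ k) + h) ^ (2 ^ k + 1)) := by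
  have : CharP L 2 := charP_of_card_eq_prime_pow hcard
  have hcop : (Nat.card L - 1).Coprime (2 ^ k - 1) := by
    rw [Nat.card_eq_fintype_card, hcard, Nat.Coprime, Nat.pow_sub_one_gcd_pow_sub_one,
      Nat.gcd_comm, hgcd, pow_one]
  have hinv : r⁻¹ ≠ 0 := inv_ne_zero hr0
  have hu : 1 + r⁻¹ ≠ 0 := by
    rwa [Ne, CharTwo.add_eq_zero, eq_comm, inv_eq_one]
  obtain ⟨h, ⟨hh0, hh⟩, huniq⟩ := existsUnique_ne_zero_pow_eq hcop hu
  have hh1 : h ≠ 1 := by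
    rintro rfl
    exact hinv (by simpa using hh)
  refine ⟨⟨h, ⟨⟨hh0, hh1⟩, hh⟩, fun y hy => huniq y ⟨hy.1.1, hy.2⟩⟩, ?_⟩
  rintro y ⟨hy0, -⟩ hy
  have heq : y ^ 2 ^ k = (1 + r⁻¹) * y := by
    rw [← hy, pow_sub_one_mul (pow_ne_zero k two_ne_zero)]
  exact ⟨eq_div_add_frobenius hy0 hr0 heq, pow_add_one_add_eq hy0 hr0 heq⟩

/-- Let L = F_{2^l}, q = 2^k with gcd(k,l) = 1. For each r ∈ L \ F_2 there is a
unique h ∈ L \ F_2 with h^{q-1} = 1 + 1/r; equivalently r = h/(h+h^q). Moreover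
b = r^{q+1} + r satisfies b = h^{q²+1}/(h^q+h)^{q+1}. -/
theorem unique_h_for_r (k l : ℕ) (hk : 0 < k) (hl : 0 < l) (hgcd : Nat.gcd k l = 1)
    (L : Type) [Field L] [Fintype L] (hcard : Fintype.card L = 2 ^ l)
    (r : L) (hr0 : r ≠ 0) (hr1 : r ≠ 1) :
    (∃! h : L, (h ≠ 0 ∧ h ≠ 1) ∧ h ^ (2 ^ k - 1) = 1 + r⁻¹) ∧
    (∀ h : L, (h ≠ 0 ∧ h ≠ 1) → h ^ (2 ^ k - 1) = 1 + r⁻¹ →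
      r = h / (h + h ^ (2 ^ k)) ∧
      r ^ (2 ^ k + 1) + r =
        h ^ ((2 ^ k) ^ 2 + 1) / (h ^ (2 ^ k) + h) ^ (2 ^ k + 1)) :=
  unique_h_for_r_general k l hgcd L hcard r hr0 hr1
end

section
/- Let L = F_{2^l}, q = 2^k with gcd(k,l) = 1, and define ρ : L \ F_2 → L by ρ(x) = x^{q^2+1}/(x^q + x)^{q+1}. Then for b ∈ L, the polynomial x^{q+1} + x + b has exactly one root in L if and only if b = ρ(h) for a (necessarily unique) h ∈ L \ F_2 with Tr_{L/F_2}(h) = 1. -/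
/-!
For `h ∉ 𝔽₂` put `x = h / (h^q + h)`; then `x^(q+1) + x = ρ(h)`, so `x` is a root of
`X^(q+1) + X + ρ(h)`. Writing any other root as `x + e`, the substitution `e z = h^q x` turns the
equation for `e` into the Artin–Schreier type equation `z^q + z = h^q`. Since `gcd(k, l) = 1`, the
map `z ↦ z^q + z` is `𝔽₂`-linear with kernel `𝔽₂`, so its image is the kernel of the trace, and
`x` is the only root iff `Tr(h^q) = Tr(h) = 1`. Conversely a unique root is not in `𝔽₂` (for
`b = 0` both `0` and `1` are roots), and every element of `L \ 𝔽₂` is `h / (h^q + h)` for exactly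
one `h ∈ L \ 𝔽₂`, since this map is injective on the finite set `L \ 𝔽₂`.
-/

open Finset

theorem pow_eq_self_of_pow_pow_eq_self {M : Type*} [Monoid M] {p k l : ℕ} (hkl : k.Coprime l)
    {x : M} (hk : x ^ p ^ k = x) (hl : x ^ p ^ l = x) : x ^ p = x := by
  have hper : ∀ n, x ^ p ^ n = x → Function.IsPeriodicPt (· ^ p) n x := fun n hn => by
    simpa [Function.IsPeriodicPt, Function.IsFixedPt, pow_iterate] using hn
  simpa [Function.IsPeriodicPt, Function.IsFixedPt, hkl.gcd_eq_one] using
    (hper k hk).gcd (hper l hl)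

theorem AddMonoidHom.card_ker_mul_card_range {G H : Type*} [AddGroup G] [AddGroup H]
    (f : G →+ H) : Nat.card f.ker * Nat.card f.range = Nat.card G := by
  rw [← AddSubgroup.index_ker, AddSubgroup.card_mul_index]

section FiniteFieldExtension

variable {K L : Type*} [Field K] [Fintype K] [Field L] [Fintype L] [Algebra K L]

theorem Module.finrank_eq_of_card_eq_pow {V : Type*} [AddCommGroup V] [Module K V] [Fintype V]
    {n : ℕ} (hcard : Fintype.card V = Fintype.card K ^ n) : Module.finrank K V = n := by
  rw [Module.card_eq_pow_finrank (K := K)] at hcard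
  exact Nat.pow_right_injective (Fintype.one_lt_card (α := K)) hcard

theorem FiniteField.trace_pow_card_pow (a : L) (n : ℕ) :
    Algebra.trace K L (a ^ Fintype.card K ^ n) = Algebra.trace K L a := by
  have h := Algebra.trace_eq_of_algEquiv (FiniteField.frobeniusAlgEquivOfAlgebraic K L ^ n) a
  rwa [AlgEquiv.coe_pow, FiniteField.coe_frobeniusAlgEquivOfAlgebraic_iterate] at h

theorem FiniteField.card_ker_trace_mul_card :
    Nat.card (Algebra.trace K L).toAddMonoidHom.ker * Nat.card K = Nat.card L := by
  have hrange : (Algebra.trace K L).toAddMonoidHom.range = ⊤ :=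
    AddMonoidHom.range_eq_top.mpr (Algebra.trace_surjective K L)
  rw [← (Algebra.trace K L).toAddMonoidHom.card_ker_mul_card_range, hrange, AddSubgroup.card_top]

end FiniteFieldExtension

section CharTwo

variable {R : Type*} [CommRing R] [CharP R 2] {k : ℕ}

theorem mul_root_shift_eq {x e h z : R} (hx : x * (h ^ 2 ^ k + h) = h)
    (hez : e * z = h ^ 2 ^ k * x) :
    h ^ 2 ^ k * ((x + e) ^ (2 ^ k + 1) + (x + e) + (x ^ (2 ^ k + 1) + x)) =
      e ^ (2 ^ k + 1) * (z ^ 2 ^ k + z + h ^ 2 ^ k) := by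
  have hxq : x ^ 2 ^ k * ((h ^ 2 ^ k) ^ 2 ^ k + h ^ 2 ^ k) = h ^ 2 ^ k := by
    rw [← add_pow_expChar_pow, ← mul_pow, hx]
  have hezq : e ^ 2 ^ k * z ^ 2 ^ k = (h ^ 2 ^ k) ^ 2 ^ k * x ^ 2 ^ k := by
    rw [← mul_pow, hez, mul_pow]
  rw [pow_succ, pow_succ, pow_succ, add_pow_expChar_pow]
  linear_combination (norm := ring_nf) e * hxq - e * hezq - e ^ 2 ^ k * hez
  simp [CharTwo.two_eq_zero]

end CharTwo

section CharTwoField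

variable {F : Type*} [Field F] [CharP F 2] {k : ℕ}

theorem div_pow_two_pow_add_self_pow_add {h : F} (hD : h ^ 2 ^ k + h ≠ 0) :
    (h / (h ^ 2 ^ k + h)) ^ (2 ^ k + 1) + h / (h ^ 2 ^ k + h) =
      h ^ ((2 ^ k) ^ 2 + 1) / (h ^ 2 ^ k + h) ^ (2 ^ k + 1) := by
  rw [eq_div_iff (pow_ne_zero _ hD)]
  have hx : h / (h ^ 2 ^ k + h) * (h ^ 2 ^ k + h) = h := div_mul_cancel₀ h hD
  set x := h / (h ^ 2 ^ k + h)
  have hxq : x ^ 2 ^ k * ((h ^ 2 ^ k) ^ 2 ^ k + h ^ 2 ^ k) = h ^ 2 ^ k := by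
    rw [← add_pow_expChar_pow, ← mul_pow, hx]
  rw [pow_succ x, pow_succ (h ^ 2 ^ k + h), sq, pow_succ, pow_mul, add_pow_expChar_pow]
  linear_combination (norm := ring_nf) (x ^ 2 ^ k * ((h ^ 2 ^ k) ^ 2 ^ k + h ^ 2 ^ k)
      + ((h ^ 2 ^ k) ^ 2 ^ k + h ^ 2 ^ k)) * hx + h * hxq
  simp [CharTwo.two_eq_zero]

theorem div_pow_two_pow_add_self_is_root {h : F} (hD : h ^ 2 ^ k + h ≠ 0) :
    (h / (h ^ 2 ^ k + h)) ^ (2 ^ k + 1) + h / (h ^ 2 ^ k + h) +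
      h ^ ((2 ^ k) ^ 2 + 1) / (h ^ 2 ^ k + h) ^ (2 ^ k + 1) = 0 := by
  rw [← div_pow_two_pow_add_self_pow_add hD, CharTwo.add_self_eq_zero]

theorem forall_root_eq_iff_not_exists {h x : F} (hh : h ≠ 0) (hx : x * (h ^ 2 ^ k + h) = h) :
    (∀ y, y ^ (2 ^ k + 1) + y + (x ^ (2 ^ k + 1) + x) = 0 → y = x) ↔
      ¬∃ z, z ^ 2 ^ k + z = h ^ 2 ^ k := by
  have hx0 : x ≠ 0 := by rintro rfl; simp [eq_comm, hh] at hx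
  have hhq : h ^ 2 ^ k ≠ 0 := pow_ne_zero _ hh
  constructor
  · rintro hroot ⟨z, hz⟩
    have hz0 : z ≠ 0 := by rintro rfl; simp at hz; exact hhq hz.symm
    have he : h ^ 2 ^ k * x / z ≠ 0 := div_ne_zero (mul_ne_zero hhq hx0) hz0
    have hshift := mul_root_shift_eq hx (div_mul_cancel₀ (h ^ 2 ^ k * x) hz0)
    rw [hz, CharTwo.add_self_eq_zero, mul_zero, mul_eq_zero, or_iff_right hhq] at hshift
    exact he (add_eq_left.mp (hroot _ hshift))
  · rintro hnone y hy
    by_contra hyx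
    have he : y - x ≠ 0 := sub_ne_zero.mpr hyx
    have hshift := mul_root_shift_eq (e := y - x) (z := h ^ 2 ^ k * x / (y - x)) hx
      (mul_div_cancel₀ _ he)
    rw [add_sub_cancel, hy, mul_zero, eq_comm, mul_eq_zero, or_iff_right (pow_ne_zero _ he),
      CharTwo.add_eq_zero] at hshift
    exact hnone ⟨_, hshift⟩

theorem mem_compl_zero_one_of_forall_root_eq {b x : F} (hroot : x ^ (2 ^ k + 1) + x + b = 0)
    (huniq : ∀ y, y ^ (2 ^ k + 1) + y + b = 0 → y = x) : x ∈ ({0, 1} : Set F)ᶜ := by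
  intro hx
  have hb : b = 0 := by
    rw [← CharTwo.add_eq_zero.mp hroot]
    rcases hx with rfl | rfl <;> simp [CharTwo.add_self_eq_zero]
  exact zero_ne_one ((huniq 0 (by simp [hb])).trans
    (huniq 1 (by simp [hb, CharTwo.add_self_eq_zero])).symm)

end CharTwoField

section FiniteFieldCharTwo

variable {L : Type*} [Field L] [Fintype L] {k l : ℕ}

theorem eq_zero_or_one_of_pow_two_pow_eq_self (hcard : Fintype.card L = 2 ^ l)
    (hkl : k.Coprime l) {z : L} (hz : z ^ 2 ^ k = z) : z = 0 ∨ z = 1 := by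
  have hl : z ^ 2 ^ l = z := hcard ▸ FiniteField.pow_card z
  have hsq : IsIdempotentElem z := by
    rw [IsIdempotentElem, ← sq]
    exact pow_eq_self_of_pow_pow_eq_self hkl hz hl
  exact IsIdempotentElem.iff_eq_zero_or_one.mp hsq

theorem sum_pow_two_pow_eq_one_iff [Algebra (ZMod 2) L] (hcard : Fintype.card L = 2 ^ l) (a : L) :
    ∑ j ∈ range l, a ^ 2 ^ j = 1 ↔ Algebra.trace (ZMod 2) L a ≠ 0 := by
  have hsum := FiniteField.algebraMap_trace_eq_sum_pow (ZMod 2) L a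
  rw [Nat.card_zmod, Module.finrank_eq_of_card_eq_pow (by rw [hcard, ZMod.card])] at hsum
  rw [← hsum, ← map_one (algebraMap (ZMod 2) L), (algebraMap (ZMod 2) L).injective.eq_iff]
  generalize Algebra.trace (ZMod 2) L a = t
  revert t
  decide

theorem trace_pow_two_pow [Algebra (ZMod 2) L] (a : L) (k : ℕ) :
    Algebra.trace (ZMod 2) L (a ^ 2 ^ k) = Algebra.trace (ZMod 2) L a := by
  simpa using FiniteField.trace_pow_card_pow (K := ZMod 2) a k

variable [CharP L 2]

theorem pow_two_pow_add_self_ne_zero (hcard : Fintype.card L = 2 ^ l) (hkl : k.Coprime l)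
    {h : L} (h0 : h ≠ 0) (h1 : h ≠ 1) : h ^ 2 ^ k + h ≠ 0 := by
  rw [Ne, CharTwo.add_eq_zero]
  intro hfix
  rcases eq_zero_or_one_of_pow_two_pow_eq_self hcard hkl hfix with rfl | rfl <;> contradiction

theorem bijOn_div_pow_two_pow_add_self (hcard : Fintype.card L = 2 ^ l) (hkl : k.Coprime l) :
    Set.BijOn (fun h : L => h / (h ^ 2 ^ k + h)) {0, 1}ᶜ {0, 1}ᶜ := by
  have hS : ∀ h ∈ ({0, 1}ᶜ : Set L), h ≠ 0 ∧ h ^ 2 ^ k + h ≠ 0 := fun h hh => by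
    simp only [Set.mem_compl_iff, Set.mem_insert_iff, Set.mem_singleton_iff, not_or] at hh
    exact ⟨hh.1, pow_two_pow_add_self_ne_zero hcard hkl hh.1 hh.2⟩
  have hmaps : Set.MapsTo (fun h : L => h / (h ^ 2 ^ k + h)) {0, 1}ᶜ {0, 1}ᶜ := by
    intro h hh
    obtain ⟨h0, hD⟩ := hS h hh
    simp only [Set.mem_compl_iff, Set.mem_insert_iff, Set.mem_singleton_iff, div_eq_zero_iff,
      div_eq_one_iff_eq hD, h0, hD, false_or]
    intro heq
    exact h0 (pow_eq_zero_iff (pow_ne_zero k two_ne_zero) |>.mp (add_eq_right.mp heq.symm))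
  refine (Set.toFinite _).injOn_iff_bijOn_of_mapsTo hmaps |>.mp fun a ha b hb hab => ?_
  obtain ⟨a0, hDa⟩ := hS a ha
  obtain ⟨b0, hDb⟩ := hS b hb
  have hfix : (a / b) ^ 2 ^ k = a / b := by
    rw [div_pow, div_eq_div_iff (pow_ne_zero _ b0) b0]
    simp only [div_eq_div_iff hDa hDb] at hab
    linear_combination -hab
  rcases eq_zero_or_one_of_pow_two_pow_eq_self hcard hkl hfix with h | h
  · exact absurd h (div_ne_zero a0 b0)
  · exact (div_eq_one_iff_eq b0).mp h

variable [Algebra (ZMod 2) L]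

theorem exists_pow_two_pow_add_self_eq_iff (hcard : Fintype.card L = 2 ^ l) (hkl : k.Coprime l)
    (c : L) : (∃ z, z ^ 2 ^ k + z = c) ↔ Algebra.trace (ZMod 2) L c = 0 := by
  set A := (iterateFrobenius L 2 k).toAddMonoidHom + AddMonoidHom.id L
  set T := (Algebra.trace (ZMod 2) L).toAddMonoidHom
  have hA : ∀ z, A z = z ^ 2 ^ k + z := fun z => rfl
  have hker : (A.ker : Set L) = {0, 1} := by
    ext z
    simp only [SetLike.mem_coe, AddMonoidHom.mem_ker, hA, CharTwo.add_eq_zero]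
    refine ⟨eq_zero_or_one_of_pow_two_pow_eq_self hcard hkl, ?_⟩
    rintro (rfl | rfl) <;> simp
  have hle : A.range ≤ T.ker := by
    rintro _ ⟨z, rfl⟩
    simp [T, hA, trace_pow_two_pow, CharTwo.add_self_eq_zero]
  have hAT : A.range = T.ker := by
    refine AddSubgroup.eq_of_le_of_card_ge hle ?_
    have hcardA : Nat.card A.ker = 2 := by
      rw [← SetLike.coe_sort_coe, hker, Nat.card_coe_set_eq, Set.ncard_pair zero_ne_one]
    have hrangeA := A.card_ker_mul_card_range
    have hkerT : Nat.card T.ker * Nat.card (ZMod 2) = Nat.card L :=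
      FiniteField.card_ker_trace_mul_card
    rw [hcardA] at hrangeA
    rw [Nat.card_zmod] at hkerT
    omega
  simpa [hA, T] using congrArg (c ∈ ·) hAT

theorem forall_root_eq_div_iff_trace_ne_zero (hcard : Fintype.card L = 2 ^ l)
    (hkl : k.Coprime l) {h : L} (h0 : h ≠ 0) (h1 : h ≠ 1) :
    (∀ y, y ^ (2 ^ k + 1) + y + h ^ ((2 ^ k) ^ 2 + 1) / (h ^ 2 ^ k + h) ^ (2 ^ k + 1) = 0 →
      y = h / (h ^ 2 ^ k + h)) ↔ Algebra.trace (ZMod 2) L h ≠ 0 := by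
  have hD := pow_two_pow_add_self_ne_zero hcard hkl h0 h1
  rw [← div_pow_two_pow_add_self_pow_add hD, forall_root_eq_iff_not_exists h0 (div_mul_cancel₀ h hD),
    exists_pow_two_pow_add_self_eq_iff hcard hkl, trace_pow_two_pow]

end FiniteFieldCharTwo

theorem one_root_iff_general (k l : ℕ) (hgcd : Nat.gcd k l = 1)
    (L : Type) [Field L] [Fintype L] [DecidableEq L] (hcard : Fintype.card L = 2 ^ l)
    (b : L) :
    (Finset.univ.filter fun x : L => x ^ (2 ^ k + 1) + x + b = 0).card = 1 ↔
      ∃! h : L, h ≠ 0 ∧ h ≠ 1 ∧ (∑ j ∈ Finset.range l, h ^ 2 ^ j) = 1 ∧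
        b = h ^ ((2 ^ k) ^ 2 + 1) / (h ^ (2 ^ k) + h) ^ (2 ^ k + 1) := by
  have : CharP L 2 := charP_of_card_eq_prime_pow hcard
  let := ZMod.algebra L 2
  have hbij := bijOn_div_pow_two_pow_add_self (L := L) (k := k) hcard hgcd
  simp only [card_eq_one, eq_singleton_iff_unique_mem, mem_filter, mem_univ, true_and,
    sum_pow_two_pow_eq_one_iff hcard]
  constructor
  · rintro ⟨x, hroot, huniq⟩
    obtain ⟨h, hh, rfl⟩ := hbij.surjOn (mem_compl_zero_one_of_forall_root_eq hroot huniq)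
    obtain ⟨h0, h1⟩ : h ≠ 0 ∧ h ≠ 1 := by simpa [not_or] using hh
    obtain rfl : b = _ := (CharTwo.add_eq_zero.mp hroot).symm.trans
      (div_pow_two_pow_add_self_pow_add (pow_two_pow_add_self_ne_zero hcard hgcd h0 h1))
    refine ⟨h, ⟨h0, h1, (forall_root_eq_div_iff_trace_ne_zero hcard hgcd h0 h1).mp huniq, rfl⟩, ?_⟩
    rintro h' ⟨h0', h1', -, hb'⟩
    refine hbij.injOn (by simp [h0', h1']) hh (huniq _ ?_)
    rw [hb']
    exact div_pow_two_pow_add_self_is_root (pow_two_pow_add_self_ne_zero hcard hgcd h0' h1')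
  · rintro ⟨h, ⟨h0, h1, htr, rfl⟩, -⟩
    exact ⟨_, div_pow_two_pow_add_self_is_root (pow_two_pow_add_self_ne_zero hcard hgcd h0 h1),
      (forall_root_eq_div_iff_trace_ne_zero hcard hgcd h0 h1).mpr htr⟩

/-- Let L = F_{2^l}, q = 2^k, gcd(k,l) = 1, ρ(x) = x^{q²+1}/(x^q+x)^{q+1}.
Then x^{q+1} + x + b has exactly one root in L iff b = ρ(h) for a necessarily
unique h ∈ L \ F_2 with Tr(h) = 1. -/
theorem one_root_iff (k l : ℕ) (hk : 0 < k) (hl : 0 < l) (hgcd : Nat.gcd k l = 1)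
    (L : Type) [Field L] [Fintype L] [DecidableEq L] (hcard : Fintype.card L = 2 ^ l)
    (b : L) :
    (Finset.univ.filter fun x : L => x ^ (2 ^ k + 1) + x + b = 0).card = 1 ↔
      ∃! h : L, h ≠ 0 ∧ h ≠ 1 ∧ (∑ j ∈ Finset.range l, h ^ 2 ^ j) = 1 ∧
        b = h ^ ((2 ^ k) ^ 2 + 1) / (h ^ (2 ^ k) + h) ^ (2 ^ k + 1) :=
  one_root_iff_general k l hgcd L hcard b
end

section
/- Let L = F_{2^l}, q = 2^k with gcd(k,l) = 1, l ≥ 2, and let d ∈ L \ F_2. The number of pairs (x,y) with x, y ∈ L \ F_2 and (x^{q+1} + x)/(y^{q+1} + y) = d equals 2^l - 4 if l is odd; 2^l - 6 if l is even and d is a (q+1)-th power in L^×; and 2^l - 3 if l is even and d is not a (q+1)-th power in L^×. -/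
/-!
In characteristic 2, `y ^ (q + 1) + y = y * (y + 1) ^ q`. For a solution `(x, y)` put
`s = (x + 1) / (y + 1)`: the equation becomes `x * s ^ q = d * y`, which together with
`x + 1 = s * (y + 1)` determines `(x, y)` rationally from `s`. This identifies the solutions
with the `s ∉ {0, 1}` such that `s ^ q ≠ d` and `s ^ (q + 1) ≠ d`, a computation valid in any
field. Frobenius gives exactly one `s` with `s ^ q = d`, while the number of `s` with
`s ^ (q + 1) = d` is `0` or `gcd (q + 1, 2 ^ l - 1)`, which is `1` for odd `l` and `3` for
even `l`.
-/

open Finset Polynomial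

lemma card_filter_eq_one_of_bijective {α β : Type*} [Fintype α] [DecidableEq β] {f : α → β}
    (hf : Function.Bijective f) (b : β) : #{a | f a = b} = 1 := by
  obtain ⟨a, rfl⟩ := hf.2 b
  exact card_eq_one.mpr ⟨a, by ext; simp [hf.1.eq_iff]⟩

namespace Nat

lemma two_pow_add_one_dvd_two_pow_two_mul_sub_one (k : ℕ) : 2 ^ k + 1 ∣ 2 ^ (2 * k) - 1 := by
  have h : 2 ^ (2 * k) - 1 = (2 ^ k + 1) * (2 ^ k - 1) := by
    rw [pow_mul', ← Nat.sq_sub_sq, one_pow]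
  exact h ▸ dvd_mul_right _ _

lemma gcd_two_pow_add_one_two_pow_sub_one_dvd (k l : ℕ) :
    gcd (2 ^ k + 1) (2 ^ l - 1) ∣ 2 ^ gcd (2 * k) l - 1 :=
  pow_sub_one_gcd_pow_sub_one 2 (2 * k) l ▸
    gcd_dvd_gcd_of_dvd_left _ (two_pow_add_one_dvd_two_pow_two_mul_sub_one k)

lemma gcd_two_pow_add_one_two_pow_sub_one_of_odd {k l : ℕ} (hkl : Coprime k l) (hl : Odd l) :
    gcd (2 ^ k + 1) (2 ^ l - 1) = 1 := by
  have h := gcd_two_pow_add_one_two_pow_sub_one_dvd k l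
  rwa [Coprime.mul_left (coprime_two_left.mpr hl) hkl, pow_one, dvd_one] at h

lemma gcd_two_pow_add_one_two_pow_sub_one_of_even {k l : ℕ} (hkl : Coprime k l) (hl : Even l) :
    gcd (2 ^ k + 1) (2 ^ l - 1) = 3 := by
  have hk : Odd k := not_even_iff_odd.mp fun hk ↦ by
    simpa [hkl] using Nat.dvd_gcd hk.two_dvd hl.two_dvd
  have hgcd : gcd (2 * k) l = 2 := by
    rw [gcd_comm, Coprime.gcd_mul l (coprime_two_left.mpr hk), gcd_comm l 2, gcd_comm l k, hkl,
      gcd_eq_left hl.two_dvd, mul_one]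
  apply dvd_antisymm
  · simpa [hgcd] using gcd_two_pow_add_one_two_pow_sub_one_dvd k l
  · obtain ⟨j, rfl⟩ := hl
    refine Nat.dvd_gcd (by simpa using hk.nat_add_dvd_pow_add_pow 2 1) ?_
    simpa [← two_mul, pow_mul] using Nat.sub_dvd_pow_sub_pow 4 1 j

end Nat

namespace FiniteField

variable {K : Type*} [Field K] [Fintype K]

lemma pow_eq_pow_iff_pow_gcd_eq_pow_gcd {m : ℕ} (hm : 0 < m) {s z : K} (hz : z ≠ 0) :
    s ^ m = z ^ m ↔ s ^ m.gcd (Fintype.card K - 1) = z ^ m.gcd (Fintype.card K - 1) := by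
  rcases eq_or_ne s 0 with rfl | hs
  · have hg : m.gcd (Fintype.card K - 1) ≠ 0 := (Nat.gcd_pos_of_pos_left _ hm).ne'
    simp [zero_pow hm.ne', zero_pow hg, hz, eq_comm (a := (0 : K))]
  · rw [← div_eq_one_iff_eq (pow_ne_zero _ hz), ← div_eq_one_iff_eq (pow_ne_zero _ hz),
      ← div_pow, ← div_pow, pow_gcd_eq_one, iff_self_and]
    exact fun _ ↦ pow_card_sub_one_eq_one _ (div_ne_zero hs hz)

lemma exists_isPrimitiveRoot_of_dvd {g : ℕ} (hg : g ∣ Fintype.card K - 1) :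
    ∃ ζ : K, IsPrimitiveRoot ζ g := by
  obtain ⟨ζ, hζ⟩ := IsCyclic.exists_ofOrder_eq_natCard (α := Kˣ)
  rw [Nat.card_units, Nat.card_eq_fintype_card] at hζ
  have hζK : IsPrimitiveRoot (ζ : K) (Fintype.card K - 1) :=
    IsPrimitiveRoot.coe_units_iff.mpr (hζ ▸ IsPrimitiveRoot.orderOf ζ)
  obtain ⟨c, hc⟩ := hg
  have hc0 : c ≠ 0 := by
    rintro rfl
    have := Fintype.one_lt_card (α := K)
    omega
  have := hζK.pow_of_dvd hc0 (Dvd.intro_left g hc.symm)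
  rw [hc, Nat.mul_div_cancel _ (Nat.pos_of_ne_zero hc0)] at this
  exact ⟨_, this⟩

variable [DecidableEq K]

lemma card_filter_pow_eq_pow_of_dvd {g : ℕ} (hg : g ∣ Fintype.card K - 1) {z : K}
    (hz : z ≠ 0) : #{s : K | s ^ g = z ^ g} = g := by
  obtain ⟨ζ, hζ⟩ := exists_isPrimitiveRoot_of_dvd hg
  have hg0 : 0 < g := Nat.pos_of_dvd_of_pos hg (Nat.sub_pos_of_lt Fintype.one_lt_card)
  have hroots : #{s : K | s ^ g = z ^ g} = (nthRoots g (z ^ g)).toFinset.card := by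
    congr 1
    ext s
    simp [mem_nthRoots hg0]
  rw [hroots, Multiset.toFinset_card_of_nodup (hζ.nthRoots_nodup (pow_ne_zero _ hz)),
    hζ.card_nthRoots, if_pos ⟨z, rfl⟩]

lemma card_filter_pow_eq_pow {m : ℕ} (hm : 0 < m) {z : K} (hz : z ≠ 0) :
    #{s : K | s ^ m = z ^ m} = m.gcd (Fintype.card K - 1) := by
  simp_rw [pow_eq_pow_iff_pow_gcd_eq_pow_gcd hm hz]
  exact card_filter_pow_eq_pow_of_dvd (Nat.gcd_dvd_right _ _) hz

omit [DecidableEq K] in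
lemma pow_injective_of_coprime {m : ℕ} (hm : 0 < m) (hcop : m.Coprime (Fintype.card K - 1)) :
    Function.Injective fun s : K ↦ s ^ m := by
  intro s t hst
  rcases eq_or_ne t 0 with rfl | ht
  · exact pow_eq_zero_iff hm.ne' |>.mp (hst.trans (zero_pow hm.ne'))
  · simpa [hcop] using (pow_eq_pow_iff_pow_gcd_eq_pow_gcd hm ht).mp hst

lemma card_filter_pow_eq_of_coprime {m : ℕ} (hm : 0 < m) (hcop : m.Coprime (Fintype.card K - 1))
    (d : K) : #{s : K | s ^ m = d} = 1 :=
  card_filter_eq_one_of_bijective (Finite.injective_iff_bijective.mp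
    (pow_injective_of_coprime hm hcop)) d

end FiniteField

section Parametrization

variable {K : Type*} [Field K] {n : ℕ} {d : K}

lemma mul_add_one_pow_eq_iff {x y : K} (hy : y + 1 ≠ 0) :
    x * (x + 1) ^ n = d * (y * (y + 1) ^ n) ↔ x * ((x + 1) / (y + 1)) ^ n = d * y := by
  rw [div_pow, mul_div_assoc', div_eq_iff (pow_ne_zero _ hy), mul_assoc]

lemma ratio_ne_of_mul_pow_eq {x y s : K} (hd : d ≠ 1) (hx : x ≠ 0) (hx1 : x + 1 ≠ 0)
    (hxs : x + 1 = s * (y + 1)) (h : x * s ^ n = d * y) :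
    s ≠ 0 ∧ s ≠ 1 ∧ s ^ n ≠ d ∧ s ^ (n + 1) ≠ d := by
  have hs0 : s ≠ 0 := by
    rintro rfl
    exact hx1 (by simpa using hxs)
  have hs1 : s ≠ 1 := by
    rintro rfl
    obtain rfl : x = y := by linear_combination hxs
    exact hd (mul_right_cancel₀ hx (by linear_combination -h))
  refine ⟨hs0, hs1, fun hsd ↦ hs1 ?_, fun hsd ↦ hs1 ?_⟩
  · obtain rfl : x = y :=
      mul_right_cancel₀ (pow_ne_zero n hs0) (by linear_combination h - y * hsd)
    exact mul_right_cancel₀ hx1 (by linear_combination -hxs)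
  · have hxy : x = s * y :=
      mul_right_cancel₀ (pow_ne_zero n hs0) (by linear_combination h - y * hsd)
    linear_combination hxy - hxs

variable (n d) in
/-- Solves `x * s ^ n = d * y`, `x + 1 = s * (y + 1)` for `(x, y)`. -/
def pairOfRatio (s : K) : K × K :=
  ((1 - s) * d / (s ^ (n + 1) - d), (1 - s) * s ^ n / (s ^ (n + 1) - d))

lemma pairOfRatio_fst_mul (s : K) : (pairOfRatio n d s).1 * s ^ n = d * (pairOfRatio n d s).2 := by
  simp only [pairOfRatio]
  ring

lemma pairOfRatio_snd_add_one {s : K} (hs : s ^ (n + 1) ≠ d) :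
    (pairOfRatio n d s).2 + 1 = (s ^ n - d) / (s ^ (n + 1) - d) := by
  simp only [pairOfRatio]
  field_simp [sub_ne_zero.mpr hs]
  ring

lemma pairOfRatio_fst_add_one {s : K} (hs : s ^ (n + 1) ≠ d) :
    (pairOfRatio n d s).1 + 1 = s * ((pairOfRatio n d s).2 + 1) := by
  rw [pairOfRatio_snd_add_one hs]
  simp only [pairOfRatio]
  field_simp [sub_ne_zero.mpr hs]
  ring

lemma eq_pairOfRatio {x y s : K} (hs : s ^ (n + 1) ≠ d)
    (hxs : x + 1 = s * (y + 1)) (h : x * s ^ n = d * y) : (x, y) = pairOfRatio n d s := by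
  have hD := sub_ne_zero.mpr hs
  simp only [pairOfRatio, Prod.mk.injEq, eq_div_iff hD]
  constructor
  · linear_combination s * h - d * hxs
  · linear_combination h - s ^ n * hxs

lemma pairOfRatio_snd_add_one_ne_zero {s : K} (hsn : s ^ n ≠ d) (hsn1 : s ^ (n + 1) ≠ d) :
    (pairOfRatio n d s).2 + 1 ≠ 0 := by
  rw [pairOfRatio_snd_add_one hsn1]
  exact div_ne_zero (sub_ne_zero.mpr hsn) (sub_ne_zero.mpr hsn1)

lemma ratio_pairOfRatio {s : K} (hsn : s ^ n ≠ d) (hsn1 : s ^ (n + 1) ≠ d) :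
    ((pairOfRatio n d s).1 + 1) / ((pairOfRatio n d s).2 + 1) = s := by
  rw [pairOfRatio_fst_add_one hsn1,
    mul_div_cancel_right₀ _ (pairOfRatio_snd_add_one_ne_zero hsn hsn1)]

variable [Fintype K] [DecidableEq K]

theorem card_filter_mul_add_one_pow_eq (hd0 : d ≠ 0) (hd1 : d ≠ 1) :
    #{p : K × K | p.1 ≠ 0 ∧ p.1 + 1 ≠ 0 ∧ p.2 ≠ 0 ∧ p.2 + 1 ≠ 0 ∧
      p.1 * (p.1 + 1) ^ n = d * (p.2 * (p.2 + 1) ^ n)} =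
    #{s : K | s ≠ 0 ∧ s ≠ 1 ∧ s ^ n ≠ d ∧ s ^ (n + 1) ≠ d} := by
  refine card_nbij' (fun p ↦ (p.1 + 1) / (p.2 + 1)) (pairOfRatio n d) ?_ ?_ ?_ ?_
  · rintro ⟨x, y⟩ hp
    simp only [mem_coe, mem_filter, mem_univ, true_and] at hp ⊢
    obtain ⟨hx0, hx1, -, hy1, h⟩ := hp
    exact ratio_ne_of_mul_pow_eq hd1 hx0 hx1 (div_mul_cancel₀ _ hy1).symm
      ((mul_add_one_pow_eq_iff hy1).mp h)
  · intro s hs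
    simp only [mem_coe, mem_filter, mem_univ, true_and] at hs ⊢
    obtain ⟨hs0, hs1, hsn, hsn1⟩ := hs
    have hD := sub_ne_zero.mpr hsn1
    have hy1 := pairOfRatio_snd_add_one_ne_zero hsn hsn1
    refine ⟨?_, ?_, ?_, hy1, ?_⟩
    · exact div_ne_zero (mul_ne_zero (sub_ne_zero.mpr (Ne.symm hs1)) hd0) hD
    · rw [pairOfRatio_fst_add_one hsn1]
      exact mul_ne_zero hs0 hy1
    · exact div_ne_zero (mul_ne_zero (sub_ne_zero.mpr (Ne.symm hs1)) (pow_ne_zero _ hs0)) hD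
    · rw [mul_add_one_pow_eq_iff hy1, ratio_pairOfRatio hsn hsn1]
      exact pairOfRatio_fst_mul s
  · rintro ⟨x, y⟩ hp
    simp only [mem_coe, mem_filter, mem_univ, true_and] at hp
    obtain ⟨hx0, hx1, -, hy1, h⟩ := hp
    have hxs : x + 1 = (x + 1) / (y + 1) * (y + 1) := (div_mul_cancel₀ _ hy1).symm
    rw [mul_add_one_pow_eq_iff hy1] at h
    exact (eq_pairOfRatio (ratio_ne_of_mul_pow_eq hd1 hx0 hx1 hxs h).2.2.2 hxs h).symm
  · intro s hs
    simp only [mem_coe, mem_filter, mem_univ, true_and] at hs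
    exact ratio_pairOfRatio hs.2.2.1 hs.2.2.2

theorem card_filter_ne_pow_add_card_filter_pow_eq (hd0 : d ≠ 0) (hd1 : d ≠ 1) :
    #{s : K | s ≠ 0 ∧ s ≠ 1 ∧ s ^ n ≠ d ∧ s ^ (n + 1) ≠ d} + 2 + #{s : K | s ^ n = d}
      + #{s : K | s ^ (n + 1) = d} = Fintype.card K := by
  have hzero (m : ℕ) : (0 : K) ^ m ≠ d := by
    cases m <;> simp [hd0.symm, hd1.symm]
  have hsplit := card_filter_add_card_filter_not (s := (univ : Finset K))
    (fun s ↦ s = 0 ∨ s = 1 ∨ s ^ n = d ∨ s ^ (n + 1) = d)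
  rw [filter_or, card_union_of_disjoint (disjoint_filter.mpr ?h0), filter_or,
    card_union_of_disjoint (disjoint_filter.mpr ?h1), filter_or,
    card_union_of_disjoint (disjoint_filter.mpr ?hn)] at hsplit
  case h0 =>
    rintro _ - rfl
    simp only [not_or]
    exact ⟨zero_ne_one, hzero n, hzero (n + 1)⟩
  case h1 =>
    rintro _ - rfl
    simp [hd1.symm]
  case hn =>
    rintro s - hsn hsn1
    apply hd1
    have hs : s = 1 := mul_left_cancel₀ hd0 (by linear_combination hsn1 - s * hsn)
    rw [← hsn, hs, one_pow]
  simp only [not_or, filter_eq', mem_univ, if_true, card_singleton, card_univ] at hsplit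
  simp only [ne_eq]
  omega

end Parametrization

section CharTwo

variable {K : Type*} [Field K] [CharP K 2]

lemma pow_two_pow_add_one_add_self (k : ℕ) (y : K) :
    y ^ (2 ^ k + 1) + y = y * (y + 1) ^ 2 ^ k := by
  rw [add_pow_char_pow, one_pow]
  ring

lemma card_filter_pow_add_self_div_eq [Fintype K] [DecidableEq K] (k : ℕ) (d : K) :
    #{p : K × K | p.1 ≠ 0 ∧ p.1 ≠ 1 ∧ p.2 ≠ 0 ∧ p.2 ≠ 1 ∧
      (p.1 ^ (2 ^ k + 1) + p.1) / (p.2 ^ (2 ^ k + 1) + p.2) = d} =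
    #{p : K × K | p.1 ≠ 0 ∧ p.1 + 1 ≠ 0 ∧ p.2 ≠ 0 ∧ p.2 + 1 ≠ 0 ∧
      p.1 * (p.1 + 1) ^ 2 ^ k = d * (p.2 * (p.2 + 1) ^ 2 ^ k)} := by
  congr 1
  refine filter_congr fun ⟨x, y⟩ _ ↦ ?_
  simp only [ne_eq, CharTwo.add_eq_zero, pow_two_pow_add_one_add_self]
  refine and_congr_right fun _ ↦ and_congr_right fun _ ↦ and_congr_right fun hy0 ↦
    and_congr_right fun hy1 ↦ ?_
  rw [div_eq_iff (mul_ne_zero hy0 (pow_ne_zero _ (CharTwo.add_eq_zero.not.mpr hy1)))]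

end CharTwo

theorem pair_count_general (k l : ℕ) (hgcd : Nat.gcd k l = 1)
    (L : Type) [Field L] [Fintype L] [DecidableEq L] (hcard : Fintype.card L = 2 ^ l)
    (d : L) (hd0 : d ≠ 0) (hd1 : d ≠ 1) :
    (Odd l →
      ((Finset.univ : Finset (L × L)).filter fun p =>
        p.1 ≠ 0 ∧ p.1 ≠ 1 ∧ p.2 ≠ 0 ∧ p.2 ≠ 1 ∧
        (p.1 ^ (2 ^ k + 1) + p.1) / (p.2 ^ (2 ^ k + 1) + p.2) = d).card = 2 ^ l - 4) ∧
    (Even l → (∃ z : L, z ≠ 0 ∧ z ^ (2 ^ k + 1) = d) →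
      ((Finset.univ : Finset (L × L)).filter fun p =>
        p.1 ≠ 0 ∧ p.1 ≠ 1 ∧ p.2 ≠ 0 ∧ p.2 ≠ 1 ∧
        (p.1 ^ (2 ^ k + 1) + p.1) / (p.2 ^ (2 ^ k + 1) + p.2) = d).card = 2 ^ l - 6) ∧
    (Even l → ¬(∃ z : L, z ≠ 0 ∧ z ^ (2 ^ k + 1) = d) →
      ((Finset.univ : Finset (L × L)).filter fun p =>
        p.1 ≠ 0 ∧ p.1 ≠ 1 ∧ p.2 ≠ 0 ∧ p.2 ≠ 1 ∧
        (p.1 ^ (2 ^ k + 1) + p.1) / (p.2 ^ (2 ^ k + 1) + p.2) = d).card = 2 ^ l - 3) := by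
  have : CharP L 2 := charP_of_card_eq_prime_pow hcard
  have hcount := card_filter_ne_pow_add_card_filter_pow_eq (n := 2 ^ k) hd0 hd1
  rw [← card_filter_mul_add_one_pow_eq hd0 hd1, ← card_filter_pow_add_self_div_eq, hcard]
    at hcount
  have hfrob : #{s : L | s ^ 2 ^ k = d} = 1 :=
    card_filter_eq_one_of_bijective (bijective_iterateFrobenius L 2 k) d
  have hN : Fintype.card L - 1 = 2 ^ l - 1 := by rw [hcard]
  refine ⟨fun hl ↦ ?_, fun hl ⟨z, hz0, hz⟩ ↦ ?_, fun hl hnot ↦ ?_⟩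
  · have hcop : Nat.Coprime (2 ^ k + 1) (Fintype.card L - 1) := by
      rw [hN]
      exact Nat.gcd_two_pow_add_one_two_pow_sub_one_of_odd hgcd hl
    have hroots := FiniteField.card_filter_pow_eq_of_coprime (by positivity) hcop d
    omega
  · have hroots := FiniteField.card_filter_pow_eq_pow (m := 2 ^ k + 1) (Nat.succ_pos _) hz0
    rw [hz, hN, Nat.gcd_two_pow_add_one_two_pow_sub_one_of_even hgcd hl] at hroots
    omega
  · have hroots : #{s : L | s ^ (2 ^ k + 1) = d} = 0 := by
      refine card_eq_zero.mpr (filter_eq_empty_iff.mpr fun s _ hs ↦ hnot ⟨s, ?_, hs⟩)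
      rintro rfl
      exact hd0 (hs ▸ zero_pow (Nat.succ_ne_zero _))
    omega

/-- Let L = F_{2^l}, l ≥ 2, q = 2^k, gcd(k,l) = 1, d ∈ L \ F_2. The number of
pairs (x,y), x,y ∈ L \ F_2, with (x^{q+1}+x)/(y^{q+1}+y) = d equals 2^l - 4 if l
is odd; 2^l - 6 if l is even and d is a (q+1)-th power in L^×; and 2^l - 3 if l
is even and d is not a (q+1)-th power in L^×. -/
theorem pair_count (k l : ℕ) (hk : 0 < k) (hl : 2 ≤ l) (hgcd : Nat.gcd k l = 1)
    (L : Type) [Field L] [Fintype L] [DecidableEq L] (hcard : Fintype.card L = 2 ^ l)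
    (d : L) (hd0 : d ≠ 0) (hd1 : d ≠ 1) :
    (Odd l →
      ((Finset.univ : Finset (L × L)).filter fun p =>
        p.1 ≠ 0 ∧ p.1 ≠ 1 ∧ p.2 ≠ 0 ∧ p.2 ≠ 1 ∧
        (p.1 ^ (2 ^ k + 1) + p.1) / (p.2 ^ (2 ^ k + 1) + p.2) = d).card = 2 ^ l - 4) ∧
    (Even l → (∃ z : L, z ≠ 0 ∧ z ^ (2 ^ k + 1) = d) →
      ((Finset.univ : Finset (L × L)).filter fun p =>
        p.1 ≠ 0 ∧ p.1 ≠ 1 ∧ p.2 ≠ 0 ∧ p.2 ≠ 1 ∧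
        (p.1 ^ (2 ^ k + 1) + p.1) / (p.2 ^ (2 ^ k + 1) + p.2) = d).card = 2 ^ l - 6) ∧
    (Even l → ¬(∃ z : L, z ≠ 0 ∧ z ^ (2 ^ k + 1) = d) →
      ((Finset.univ : Finset (L × L)).filter fun p =>
        p.1 ≠ 0 ∧ p.1 ≠ 1 ∧ p.2 ≠ 0 ∧ p.2 ≠ 1 ∧
        (p.1 ^ (2 ^ k + 1) + p.1) / (p.2 ^ (2 ^ k + 1) + p.2) = d).card = 2 ^ l - 3) :=
  pair_count_general k l hgcd L hcard d hd0 hd1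
end

section
/- Let L = F_{2^l} with l > 3, q = 2^k, gcd(k,l) = 1, and let I_j = {b ∈ L : x^{q+1} + x + b has exactly j roots in L}. Then for every d ∈ L^× (if l is odd), respectively every d ∈ L^× that is not a (q+1)-th power (if l is even), the sets d·I_3 and I_1 ∪ I_2 ∪ I_3 intersect nontrivially. -/
/-!
Write `σ x = x ^ q`. Since `gcd k l = 1`, `σ` is a field endomorphism whose only fixed points are
`0` and `1`. Let `N b` be the number of roots of `f x = b`, where `f x = σ x * x + x`. Then `N 0 = 2`, and `N b ∈ {0, 1, 3}` for
`b ≠ 0`: four roots would have a `σ`-invariant cross-ratio, and from two roots `x₁, x₂` we get a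
third one, `(x₂ w + x₁) / (w + 1)`, where `σ w = (x₂ / x₁) w`.

For `y` not fixed by `σ²`, put `e y = (y + σ y) / (y + σ² y)`. Then `f x = f (e y)` has the three
roots `e y`, `e y⁻¹` and `e (y + 1)⁻¹`. Since `e` is at most two-to-one,
`|L| ≤ |Fix σ²| + 6 |I₃|`.

Now suppose `N (d b) = 0` whenever `N b = 3`. Count the pairs `(x, y)` with `f y = d f x` in two
ways. One count is `∑ N b N (d b)`. Writing `y = v x` gives the other: `|L| + 2 - W`, where
`W = #{v | v ^ (q + 1) = d ∨ v = d}`. Comparing the two shows `|I₃| ≤ W`. For odd `l`, `σ²` fixes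
only `0` and `1`, and `v ↦ v ^ (q + 1)` is injective, so `|Fix σ²| ≤ 2` and `W ≤ 2`. For even `l`,
`|Fix σ²| ≤ 4` and `W = 1`. In both cases this contradicts `|L| ≥ 16`.
-/

open Finset Function

theorem sum_mul_comp_add_card_le {α : Type*} [Fintype α] [DecidableEq α] {N : α → ℕ} {e : α ≃ α}
    {o : α} (heo : e o = o) (hNo : N o = 2) (hN : ∀ b ≠ o, N b ≤ 3 ∧ N b ≠ 2)
    (h3 : ∀ b, N b = 3 → N (e b) = 0) :
    ∑ b, N b * N (e b) + #{b | N b = 3} ≤ ∑ b, N b + 2 := by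
  have key (b : α) : N b * N (e b) + (if N b = 0 then 1 else 0) + (if N b = 3 then 1 else 0) ≤
      N (e b) + (if N (e b) = 0 then 1 else 0) + (if b = o then 2 else 0) := by
    rcases eq_or_ne b o with rfl | hb
    · simp [heo, hNo]
    have heb : e b ≠ o := fun h => hb (e.injective (h.trans heo.symm))
    have h3b := h3 b
    obtain ⟨h₁, h₂⟩ := hN b hb
    obtain ⟨h₁', h₂'⟩ := hN _ heb
    interval_cases N b <;> interval_cases N (e b) <;> simp_all
  have hsum := sum_le_sum fun b (_ : b ∈ univ) => key b
  have hzero : #{b | N (e b) = 0} = #{b | N b = 0} := by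
    simpa only [card_filter] using e.sum_comp fun b => if N b = 0 then 1 else 0
  simp only [sum_add_distrib, ← card_filter, sum_ite_eq', mem_univ, if_true, e.sum_comp N,
    hzero] at hsum
  omega

namespace ProjectivePolynomial

variable {L : Type*} [Field L]

def projPoly (σ : L →+* L) (x : L) : L := σ x * x + x

def rootParam (σ : L →+* L) (y : L) : L := (y + σ y) / (y + σ (σ y))

def numRoots [Fintype L] [DecidableEq L] (σ : L →+* L) (b : L) : ℕ := #{x | projPoly σ x = b}

variable {σ : L →+* L}

lemma ne_zero_of_projPoly_eq {b x : L} (hb : b ≠ 0) (hx : projPoly σ x = b) : x ≠ 0 := by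
  rintro rfl
  simp [projPoly, ← hx] at hb

lemma ne_zero_of_map_map_ne {y : L} (hy : σ (σ y) ≠ y) : y ≠ 0 := by
  rintro rfl
  simp at hy

lemma map_ne_self_of_map_map_ne {y : L} (hy : σ (σ y) ≠ y) : σ y ≠ y := by
  intro h
  rw [h, h] at hy
  exact hy rfl

lemma eq_of_map_mul_eq_map_mul (hσ : ∀ x, σ x = x → x = 0 ∨ x = 1) {u v : L}
    (hu : u ≠ 0) (hv : v ≠ 0) (h : σ u * v = σ v * u) : u = v := by
  have : σ (u / v) = u / v := by
    rw [map_div₀, div_eq_div_iff (by simpa using hv) hv, h, mul_comm]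
  rcases hσ _ this with h0 | h1
  · exact absurd h0 (div_ne_zero hu hv)
  · exact (div_eq_one_iff_eq hv).mp h1

lemma map_div_self_injective (hσ : ∀ x, σ x = x → x = 0 ∨ x = 1) :
    Injective fun x : L => σ x / x := by
  have hzero {u v : L} (hu : u = 0) (h : σ u / u = σ v / v) : v = 0 := by
    simpa [hu, eq_comm (a := (0 : L))] using h
  intro u v h
  rcases eq_or_ne u 0 with hu | hu
  · rw [hu, hzero hu h]
  rcases eq_or_ne v 0 with hv | hv
  · rw [hv, hzero hv h.symm]
  exact eq_of_map_mul_eq_map_mul hσ hu hv ((div_eq_div_iff hu hv).mp h)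

lemma exists_map_eq_mul [Finite L] (hσ : ∀ x, σ x = x → x = 0 ∨ x = 1) {s : L} (hs : s ≠ 0) :
    ∃ w ≠ 0, σ w = s * w := by
  obtain ⟨w, hw⟩ := Finite.injective_iff_surjective.mp (map_div_self_injective hσ) s
  have hw0 : w ≠ 0 := by
    rintro rfl
    simp only [map_zero, div_zero] at hw
    exact hs hw.symm
  exact ⟨w, hw0, by rw [← hw, div_mul_cancel₀ _ hw0]⟩

lemma map_mul_self_injective (hσ₂ : ∀ x, σ (σ x) = x → x = 0 ∨ x = 1) :
    Injective fun v : L => σ v * v := by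
  intro a b h
  simp only at h
  rcases eq_or_ne b 0 with rfl | hb
  · simpa using h
  have ht : σ (a / b) * (a / b) = 1 := by
    rw [map_div₀, div_mul_div_comm, h, div_self (mul_ne_zero ((map_ne_zero σ).mpr hb) hb)]
  have hfix : σ (σ (a / b)) = a / b := by
    rw [eq_inv_of_mul_eq_one_left ht, map_inv₀, eq_inv_of_mul_eq_one_left ht, inv_inv]
  rcases hσ₂ _ hfix with h0 | h1
  · simp [h0] at ht
  · exact (div_eq_one_iff_eq hb).mp h1

section Finite

variable [Fintype L] [DecidableEq L]

lemma sum_numRoots : ∑ b, numRoots σ b = Fintype.card L :=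
  (card_eq_sum_card_fiberwise fun x (_ : x ∈ univ) => mem_univ (projPoly σ x)).symm

lemma sum_numRoots_mul_numRoots (d : L) :
    ∑ b, numRoots σ b * numRoots σ (d * b) =
      #{p : L × L | projPoly σ p.2 = d * projPoly σ p.1} := by
  calc ∑ b, numRoots σ b * numRoots σ (d * b)
      = ∑ b, ∑ x with projPoly σ x = b, numRoots σ (d * projPoly σ x) := by
        refine sum_congr rfl fun b _ => ?_
        rw [sum_congr rfl fun x hx => by rw [(mem_filter.mp hx).2], sum_const, smul_eq_mul,
          numRoots]
    _ = ∑ x, numRoots σ (d * projPoly σ x) := sum_fiberwise _ _ _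
    _ = _ := by simp only [numRoots, card_filter, Fintype.sum_prod_type]

lemma card_filter_map_mul_self_eq_or_eq_le_two (hσ₂ : ∀ x, σ (σ x) = x → x = 0 ∨ x = 1)
    (d : L) : #{v | σ v * v = d ∨ v = d} ≤ 2 := by
  have hroot : #{v | σ v * v = d} ≤ 1 := card_le_one.mpr fun a ha b hb =>
    map_mul_self_injective hσ₂ ((mem_filter.mp ha).2.trans (mem_filter.mp hb).2.symm)
  have hd : #{v | v = d} = 1 := by rw [filter_eq', if_pos (mem_univ d), card_singleton]
  rw [filter_or]
  exact (card_union_le _ _).trans (by omega)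

end Finite

section CharTwo

variable [CharP L 2]

lemma projPoly_eq_zero_iff {x : L} : projPoly σ x = 0 ↔ x = 0 ∨ x = 1 := by
  rw [projPoly, show σ x * x + x = (σ x + 1) * x by ring, mul_eq_zero, CharTwo.add_eq_zero,
    σ.injective.eq_iff' (map_one σ), or_comm]

lemma map_add_mul_of_projPoly_eq {b x y : L} (hx : projPoly σ x = b) (hy : projPoly σ y = b) :
    σ (x + y) * (x * y) = b * (x + y) := by
  unfold projPoly at hx hy
  rw [map_add]
  grind

/-- The cross-ratio of four roots is fixed by `σ`, so it is `0` or `1`. -/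
lemma not_four_roots (hσ : ∀ x, σ x = x → x = 0 ∨ x = 1) {b x₁ x₂ x₃ x₄ : L} (hb : b ≠ 0)
    (h₁ : projPoly σ x₁ = b) (h₂ : projPoly σ x₂ = b) (h₃ : projPoly σ x₃ = b)
    (h₄ : projPoly σ x₄ = b) (h₁₂ : x₁ ≠ x₂) (h₁₃ : x₁ ≠ x₃) (h₁₄ : x₁ ≠ x₄) (h₂₃ : x₂ ≠ x₃)
    (h₂₄ : x₂ ≠ x₄) (h₃₄ : x₃ ≠ x₄) : False := by
  have hne {a c : L} (h : a ≠ c) : a + c ≠ 0 := CharTwo.add_eq_zero.not.mpr h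
  have hprod : x₁ * x₂ * x₃ * x₄ ≠ 0 := by
    simp only [mul_ne_zero_iff]
    exact ⟨⟨⟨ne_zero_of_projPoly_eq hb h₁, ne_zero_of_projPoly_eq hb h₂⟩,
      ne_zero_of_projPoly_eq hb h₃⟩, ne_zero_of_projPoly_eq hb h₄⟩
  have h13 := map_add_mul_of_projPoly_eq h₁ h₃
  have h24 := map_add_mul_of_projPoly_eq h₂ h₄
  have h14 := map_add_mul_of_projPoly_eq h₁ h₄
  have h23 := map_add_mul_of_projPoly_eq h₂ h₃
  have hcross : (x₁ + x₃) * (x₂ + x₄) = (x₁ + x₄) * (x₂ + x₃) := by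
    refine eq_of_map_mul_eq_map_mul hσ (mul_ne_zero (hne h₁₃) (hne h₂₄))
      (mul_ne_zero (hne h₁₄) (hne h₂₃)) (mul_left_cancel₀ hprod ?_)
    simp only [map_mul]
    linear_combination (x₁ + x₄) * (x₂ + x₃) * (σ (x₁ + x₃) * x₁ * x₃ * h24 + b * (x₂ + x₄) * h13)
      - (x₁ + x₃) * (x₂ + x₄) * (σ (x₁ + x₄) * x₁ * x₄ * h23 + b * (x₂ + x₃) * h14)
  have : (x₁ - x₂) * (x₃ - x₄) = 0 := by linear_combination -hcross
  rcases mul_eq_zero.mp this with h | h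
  · exact h₁₂ (sub_eq_zero.mp h)
  · exact h₃₄ (sub_eq_zero.mp h)

lemma exists_third_root [Finite L] (hσ : ∀ x, σ x = x → x = 0 ∨ x = 1) {b x₁ x₂ : L}
    (hb : b ≠ 0) (h₁ : projPoly σ x₁ = b) (h₂ : projPoly σ x₂ = b) (h₁₂ : x₁ ≠ x₂) :
    ∃ x₃, projPoly σ x₃ = b ∧ x₃ ≠ x₁ ∧ x₃ ≠ x₂ := by
  have hx₁ := ne_zero_of_projPoly_eq hb h₁
  obtain ⟨w, hw0, hw⟩ := exists_map_eq_mul hσ (div_ne_zero (ne_zero_of_projPoly_eq hb h₂) hx₁)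
  have hw1 : w + 1 ≠ 0 := by
    rw [Ne, CharTwo.add_eq_zero]
    rintro rfl
    rw [map_one, mul_one, eq_comm, div_eq_one_iff_eq hx₁] at hw
    exact h₁₂ hw.symm
  have hσw1 : σ w + 1 ≠ 0 := by simpa using (map_ne_zero σ).mpr hw1
  have hσw : x₁ * σ w = x₂ * w := by rw [hw]; field_simp
  refine ⟨(x₂ * w + x₁) / (w + 1), ?_, ?_, ?_⟩
  · unfold projPoly at *
    rw [map_div₀, map_add, map_add, map_mul, map_one]
    field_simp
    grind
  · rw [Ne, div_eq_iff hw1]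
    intro h
    have : (x₂ - x₁) * w = 0 := by linear_combination h
    exact h₁₂ (sub_eq_zero.mp ((mul_eq_zero.mp this).resolve_right hw0)).symm
  · rw [Ne, div_eq_iff hw1]
    intro h
    exact h₁₂ (by linear_combination h)

lemma rootParam_add_one (y : L) : rootParam σ (y + 1) = rootParam σ y := by
  simp only [rootParam, map_add, map_one]
  congr 1 <;> grind

lemma rootParam_ne_zero {y : L} (hy : σ (σ y) ≠ y) : rootParam σ y ≠ 0 :=
  div_ne_zero (CharTwo.add_eq_zero.not.mpr (map_ne_self_of_map_map_ne hy).symm)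
    (CharTwo.add_eq_zero.not.mpr hy.symm)

lemma rootParam_inv {y : L} (hy : σ (σ y) ≠ y) :
    rootParam σ y⁻¹ = rootParam σ y * (σ (σ y) / σ y) := by
  have h₁ : y + σ (σ y) ≠ 0 := CharTwo.add_eq_zero.not.mpr hy.symm
  have h₂ : σ y ≠ 0 := (map_ne_zero σ).mpr (ne_zero_of_map_map_ne hy)
  have h₃ : σ (σ y) ≠ 0 := (map_ne_zero σ).mpr h₂
  simp only [rootParam, map_inv₀]
  field_simp
  grind

lemma projPoly_rootParam_inv {y : L} (hy : σ (σ y) ≠ y) :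
    projPoly σ (rootParam σ y⁻¹) = projPoly σ (rootParam σ y) := by
  have h₁ : y + σ (σ y) ≠ 0 := CharTwo.add_eq_zero.not.mpr hy.symm
  have h₂ : σ y + σ (σ (σ y)) ≠ 0 := by simpa using (map_ne_zero σ).mpr h₁
  have h₃ : σ y ≠ 0 := (map_ne_zero σ).mpr (ne_zero_of_map_map_ne hy)
  rw [rootParam_inv hy]
  simp only [projPoly, rootParam, map_mul, map_div₀, map_add]
  field_simp
  grind

lemma eq_or_eq_add_one_of_rootParam_eq (hσ : ∀ x, σ x = x → x = 0 ∨ x = 1) {y y' : L}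
    (hy : σ (σ y) ≠ y) (hy' : σ (σ y') ≠ y') (h : rootParam σ y = rootParam σ y') :
    y' = y ∨ y' = y + 1 := by
  have hu : y + σ y ≠ 0 := CharTwo.add_eq_zero.not.mpr (map_ne_self_of_map_map_ne hy).symm
  have hu' : y' + σ y' ≠ 0 := CharTwo.add_eq_zero.not.mpr (map_ne_self_of_map_map_ne hy').symm
  have huu : y + σ y = y' + σ y' := by
    refine eq_of_map_mul_eq_map_mul hσ hu hu' ?_
    rw [rootParam, rootParam, div_eq_div_iff (CharTwo.add_eq_zero.not.mpr hy.symm)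
      (CharTwo.add_eq_zero.not.mpr hy'.symm)] at h
    simp only [map_add]
    grind
  have hfix : σ (y + y') = y + y' := by rw [map_add]; grind
  rcases hσ _ hfix with h0 | h1
  · exact .inl (CharTwo.add_eq_zero.mp h0).symm
  · exact .inr (by grind)

lemma projPoly_mul_eq_mul_iff {d v x : L} (hx : x ≠ 0) :
    projPoly σ (v * x) = d * projPoly σ x ↔ σ x * (σ v * v + d) = v + d := by
  rw [← CharTwo.add_eq_zero, ← CharTwo.add_eq_zero (a := σ x * _), projPoly, projPoly, map_mul,
    show σ v * σ x * (v * x) + v * x + d * (σ x * x + x) =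
      x * (σ x * (σ v * v + d) + (v + d)) by ring, mul_eq_zero, or_iff_right hx]

lemma not_map_mul_self_eq_or_eq {d v x : L} (hdd : σ d * d ≠ d) (hx : x ≠ 0)
    (h : σ x * (σ v * v + d) = v + d) : ¬(σ v * v = d ∨ v = d) := by
  rintro (hv | rfl)
  · rw [CharTwo.add_eq_zero.mpr hv, mul_zero, eq_comm, CharTwo.add_eq_zero] at h
    exact hdd (h ▸ hv)
  · rw [CharTwo.add_self_eq_zero, mul_eq_zero, map_eq_zero, CharTwo.add_eq_zero] at h
    exact h.elim hx hdd

section Finite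

variable [Fintype L] [DecidableEq L]

lemma numRoots_zero : numRoots σ 0 = 2 := by
  rw [numRoots, show ({x | projPoly σ x = 0} : Finset L) = {0, 1} by
    ext; simp [projPoly_eq_zero_iff], card_pair zero_ne_one]

lemma numRoots_le_three (hσ : ∀ x, σ x = x → x = 0 ∨ x = 1) (b : L) : numRoots σ b ≤ 3 := by
  rcases eq_or_ne b 0 with rfl | hb
  · rw [numRoots_zero]; norm_num
  by_contra! h
  obtain ⟨t, hts, ht⟩ := exists_subset_card_eq (Nat.succ_le_of_lt h)
  obtain ⟨x₁, x₂, x₃, x₄, h₁₂, h₁₃, h₁₄, h₂₃, h₂₄, h₃₄, rfl⟩ := card_eq_four.mp ht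
  simp only [insert_subset_iff, singleton_subset_iff, mem_filter, mem_univ, true_and] at hts
  exact not_four_roots hσ hb hts.1 hts.2.1 hts.2.2.1 hts.2.2.2 h₁₂ h₁₃ h₁₄ h₂₃ h₂₄ h₃₄

lemma numRoots_ne_two (hσ : ∀ x, σ x = x → x = 0 ∨ x = 1) {b : L} (hb : b ≠ 0) :
    numRoots σ b ≠ 2 := by
  intro h
  obtain ⟨x₁, x₂, h₁₂, hroots⟩ := card_eq_two.mp h
  have hmem {x : L} : projPoly σ x = b ↔ x = x₁ ∨ x = x₂ := by
    simpa using congrArg (x ∈ ·) hroots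
  obtain ⟨x₃, h₃, h₃₁, h₃₂⟩ :=
    exists_third_root hσ hb (hmem.mpr (.inl rfl)) (hmem.mpr (.inr rfl)) h₁₂
  exact (hmem.mp h₃).elim h₃₁ h₃₂

lemma three_le_numRoots {y : L} (hy : σ (σ y) ≠ y) :
    3 ≤ numRoots σ (projPoly σ (rootParam σ y)) := by
  have hy1 : σ (σ (y + 1)) ≠ y + 1 := by simpa [map_add] using hy
  have hY₁ : σ y ≠ 0 := (map_ne_zero σ).mpr (ne_zero_of_map_map_ne hy)
  have hY₁' : σ y + 1 ≠ 0 := by simpa using (map_ne_zero σ).mpr (ne_zero_of_map_map_ne hy1)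
  have hY : σ (σ y) ≠ σ y := fun h => map_ne_self_of_map_map_ne hy (σ.injective h)
  set r := rootParam σ y
  have hr : r ≠ 0 := rootParam_ne_zero hy
  have h₂ : rootParam σ y⁻¹ = r * (σ (σ y) / σ y) := rootParam_inv hy
  have h₃ : rootParam σ (y + 1)⁻¹ = r * ((σ (σ y) + 1) / (σ y + 1)) := by
    simp [rootParam_inv hy1, rootParam_add_one, r]
  refine two_lt_card.mpr ⟨r, ?_, r * (σ (σ y) / σ y), ?_, r * ((σ (σ y) + 1) / (σ y + 1)), ?_,
    ?_, ?_, ?_⟩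
  · simp
  · simp [← h₂, projPoly_rootParam_inv hy, r]
  · simp [← h₃, projPoly_rootParam_inv hy1, rootParam_add_one, r]
  · rw [Ne, left_eq_mul₀ hr, div_eq_one_iff_eq hY₁]
    exact hY
  · rw [Ne, left_eq_mul₀ hr, div_eq_one_iff_eq hY₁', add_left_inj]
    exact hY
  · rw [Ne, mul_right_inj' hr, div_eq_div_iff hY₁ hY₁']
    intro h
    exact hY (by linear_combination h)

lemma card_rootParam_fiber_le_two (hσ : ∀ x, σ x = x → x = 0 ∨ x = 1) (r : L) :
    #{y | σ (σ y) ≠ y ∧ rootParam σ y = r} ≤ 2 := by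
  obtain h | ⟨y₀, hy₀⟩ := ({y | σ (σ y) ≠ y ∧ rootParam σ y = r} : Finset L).eq_empty_or_nonempty
  · simp [h]
  refine (card_le_card fun y hy => ?_).trans (card_le_two (a := y₀) (b := y₀ + 1))
  simp only [mem_filter, mem_univ, true_and] at hy₀ hy
  simpa using eq_or_eq_add_one_of_rootParam_eq hσ hy₀.1 hy.1 (hy₀.2.trans hy.2.symm)

lemma card_le_card_fixedPoints_add (hσ : ∀ x, σ x = x → x = 0 ∨ x = 1) :
    Fintype.card L ≤ #{y | σ (σ y) = y} + 6 * #{b | numRoots σ b = 3} := by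
  have hfiber (b : L) : #{y | σ (σ y) ≠ y ∧ projPoly σ (rootParam σ y) = b} ≤ 6 :=
    calc _ ≤ 2 * numRoots σ b :=
          card_le_mul_card_image_of_maps_to (f := rootParam σ) (by simp) 2 fun r _ =>
            (card_le_card (by intro y; simp; tauto)).trans (card_rootParam_fiber_le_two hσ r)
      _ ≤ 2 * 3 := Nat.mul_le_mul_left 2 (numRoots_le_three hσ b)
  have hmoved : #{y | σ (σ y) ≠ y} ≤ 6 * #{b | numRoots σ b = 3} :=
    card_le_mul_card_image_of_maps_to (f := fun y => projPoly σ (rootParam σ y))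
      (fun y hy => by
        simp only [mem_filter, mem_univ, true_and] at hy ⊢
        exact le_antisymm (numRoots_le_three hσ _) (three_le_numRoots hy))
      6 fun b _ => (card_le_card (by intro y; simp)).trans (hfiber b)
  have hsplit := card_filter_add_card_filter_not (s := univ) (fun y : L => σ (σ y) = y)
  simp only [card_univ, ← ne_eq] at hsplit
  omega

lemma filter_projPoly_eq_mul_fst_eq_zero (d : L) :
    ({p : L × L | projPoly σ p.2 = d * projPoly σ p.1 ∧ p.1 = 0} : Finset (L × L)) =
      {(0, 0), (0, 1)} := by
  have h₀ : projPoly σ (0 : L) = 0 := projPoly_eq_zero_iff.mpr (.inl rfl)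
  have h₁ : projPoly σ (1 : L) = 0 := projPoly_eq_zero_iff.mpr (.inr rfl)
  ext ⟨x, y⟩
  simp only [mem_filter, mem_univ, true_and, mem_insert, mem_singleton, Prod.mk.injEq]
  constructor
  · rintro ⟨h, rfl⟩
    simpa [h₀, projPoly_eq_zero_iff] using h
  · rintro (⟨rfl, rfl⟩ | ⟨rfl, rfl⟩) <;> simp [h₀, h₁]

lemma card_filter_projPoly_eq_mul_fst_ne_zero {d : L} (hd0 : d ≠ 0) (hd1 : d ≠ 1) :
    #{p : L × L | projPoly σ p.2 = d * projPoly σ p.1 ∧ p.1 ≠ 0} =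
      #{v | ¬(σ v * v = d ∨ v = d)} := by
  have hdd : σ d * d ≠ d := fun h =>
    hd1 ((σ.injective.eq_iff' (map_one σ)).mp ((mul_eq_right₀ hd0).mp h))
  refine card_nbij (fun p => p.2 / p.1) ?_ ?_ ?_
  · rintro ⟨x, y⟩ hp
    simp only [coe_filter, mem_univ, true_and, Set.mem_ofPred_eq] at hp ⊢
    rw [← div_mul_cancel₀ y hp.2, projPoly_mul_eq_mul_iff hp.2] at hp
    exact not_map_mul_self_eq_or_eq hdd hp.2 hp.1
  · rintro ⟨x, y⟩ hp ⟨x', y'⟩ hp' (h : y / x = y' / x')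
    simp only [coe_filter, mem_univ, true_and, Set.mem_ofPred_eq] at hp hp'
    rw [← div_mul_cancel₀ y hp.2, projPoly_mul_eq_mul_iff hp.2] at hp
    rw [← div_mul_cancel₀ y' hp'.2, projPoly_mul_eq_mul_iff hp'.2, ← h] at hp'
    have hv : σ (y / x) * (y / x) + d ≠ 0 := fun h0 =>
      not_map_mul_self_eq_or_eq hdd hp.2 hp.1 (.inl (CharTwo.add_eq_zero.mp h0))
    obtain rfl : x = x' := σ.injective (mul_right_cancel₀ hv (hp.1.trans hp'.1.symm))
    rw [div_left_inj' hp.2] at h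
    rw [h]
  · intro v hv
    simp only [coe_filter, mem_univ, true_and, Set.mem_ofPred_eq, not_or] at hv
    have hv₁ : σ v * v + d ≠ 0 := CharTwo.add_eq_zero.not.mpr hv.1
    have hv₂ : v + d ≠ 0 := CharTwo.add_eq_zero.not.mpr hv.2
    obtain ⟨x, hx⟩ := (Finite.injective_iff_surjective.mp σ.injective) ((v + d) / (σ v * v + d))
    have hx0 : x ≠ 0 := by
      rintro rfl
      exact div_ne_zero hv₂ hv₁ (by simpa using hx.symm)
    refine ⟨(x, v * x), ?_, mul_div_cancel_right₀ v hx0⟩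
    simp only [coe_filter, mem_univ, true_and, Set.mem_ofPred_eq]
    rw [projPoly_mul_eq_mul_iff hx0, hx, div_mul_cancel₀ _ hv₁]
    exact ⟨rfl, hx0⟩

lemma card_filter_projPoly_eq_mul_add {d : L} (hd0 : d ≠ 0) (hd1 : d ≠ 1) :
    #{p : L × L | projPoly σ p.2 = d * projPoly σ p.1} + #{v | σ v * v = d ∨ v = d} =
      Fintype.card L + 2 := by
  have h₁ := card_filter_add_card_filter_not
    (s := ({p : L × L | projPoly σ p.2 = d * projPoly σ p.1} : Finset _)) (fun p => p.1 = 0)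
  have h₂ := card_filter_add_card_filter_not (s := univ) (fun v : L => σ v * v = d ∨ v = d)
  simp only [filter_filter, ← ne_eq, card_univ] at h₁ h₂
  rw [filter_projPoly_eq_mul_fst_eq_zero, card_filter_projPoly_eq_mul_fst_ne_zero hd0 hd1,
    card_pair (by simp)] at h₁
  omega

lemma card_numRoots_eq_three_le (hσ : ∀ x, σ x = x → x = 0 ∨ x = 1) {d : L} (hd0 : d ≠ 0)
    (hd1 : d ≠ 1) (h3 : ∀ b, numRoots σ b = 3 → numRoots σ (d * b) = 0) :
    #{b | numRoots σ b = 3} ≤ #{v | σ v * v = d ∨ v = d} := by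
  have := sum_mul_comp_add_card_le (e := Equiv.mulLeft₀ d hd0) (mul_zero d) numRoots_zero
    (fun b hb => ⟨numRoots_le_three hσ b, numRoots_ne_two hσ hb⟩) h3
  simp only [Equiv.mulLeft₀_apply, sum_numRoots, sum_numRoots_mul_numRoots] at this
  have := card_filter_projPoly_eq_mul_add (σ := σ) hd0 hd1
  omega

end Finite

end CharTwo

end ProjectivePolynomial

lemma card_filter_pow_four_eq_self_le {L : Type*} [Field L] [Fintype L] [DecidableEq L] :
    #{x : L | x ^ 4 = x} ≤ 4 := by
  open Polynomial in
  have hdeg : (X ^ 4 - X : L[X]).natDegree = 4 := by compute_degree!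
  have hp : (X ^ 4 - X : L[X]) ≠ 0 := ne_zero_of_natDegree_gt (n := 0) (by rw [hdeg]; norm_num)
  refine (card_le_degree_of_subset_roots fun x hx => ?_).trans hdeg.le
  simp only [mem_val, mem_filter, mem_univ, true_and] at hx
  simp [mem_roots hp, hx]

section FiniteFieldOfCharTwo

variable {L : Type*} [Field L] [CharP L 2] {k l : ℕ}

lemma iterateFrobenius_iterateFrobenius (x : L) :
    iterateFrobenius L 2 k (iterateFrobenius L 2 k x) = x ^ 2 ^ (2 * k) := by
  rw [two_mul, ← iterateFrobenius_def, iterateFrobenius_add]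
  rfl

variable [Fintype L]

lemma pow_two_pow_eq_self_of_gcd_dvd (hcard : Fintype.card L = 2 ^ l) {m n : ℕ}
    (hmn : m.gcd l ∣ n) {x : L} (hx : x ^ 2 ^ m = x) : x ^ 2 ^ n = x := by
  have hm : IsPeriodicPt (frobenius L 2) m x := by
    simpa [IsPeriodicPt, IsFixedPt, iterate_frobenius] using hx
  have hl : IsPeriodicPt (frobenius L 2) l x := by
    simpa [IsPeriodicPt, IsFixedPt, iterate_frobenius, ← hcard] using FiniteField.pow_card x
  simpa [IsPeriodicPt, IsFixedPt, iterate_frobenius] using (hm.gcd hl).trans_dvd hmn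

lemma eq_zero_or_one_of_iterateFrobenius_eq_self (hcard : Fintype.card L = 2 ^ l)
    (hgcd : k.gcd l = 1) : ∀ x : L, iterateFrobenius L 2 k x = x → x = 0 ∨ x = 1 :=
  fun _ hx => eq_zero_or_one_of_sq_eq_self
    (pow_two_pow_eq_self_of_gcd_dvd (n := 1) hcard (by rw [hgcd]) hx)

variable [DecidableEq L]

lemma card_fixedPoints_add_six_mul_lt (hl : 3 < l) (hcard : Fintype.card L = 2 ^ l)
    (hgcd : k.gcd l = 1) {d : L} (hd : d ≠ 0)
    (hcase : Odd l ∨ ¬∃ z : L, z ≠ 0 ∧ z ^ (2 ^ k + 1) = d) :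
    #{y | iterateFrobenius L 2 k (iterateFrobenius L 2 k y) = y} +
      6 * #{v | iterateFrobenius L 2 k v * v = d ∨ v = d} < Fintype.card L := by
  set σ := iterateFrobenius L 2 k
  have h16 : 16 ≤ Fintype.card L := hcard ▸ (Nat.pow_le_pow_right two_pos hl : 2 ^ 4 ≤ 2 ^ l)
  have h2k : (2 * k).gcd l = Nat.gcd 2 l := Nat.Coprime.gcd_mul_right_cancel 2 hgcd
  rcases hcase with hodd | hno
  · have hσ₂ (x : L) (hx : σ (σ x) = x) : x = 0 ∨ x = 1 := by
      refine eq_zero_or_one_of_sq_eq_self (pow_two_pow_eq_self_of_gcd_dvd (n := 1) hcard ?_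
        ((iterateFrobenius_iterateFrobenius x).symm.trans hx))
      rw [h2k, Nat.coprime_two_left.mpr hodd]
    have hfix : #{y | σ (σ y) = y} ≤ 2 :=
      (card_le_card fun y hy => by simpa using hσ₂ y (mem_filter.mp hy).2).trans card_le_two
    have := ProjectivePolynomial.card_filter_map_mul_self_eq_or_eq_le_two hσ₂ d
    omega
  · have hfix : #{y | σ (σ y) = y} ≤ 4 := by
      refine (card_le_card fun y hy => ?_).trans card_filter_pow_four_eq_self_le
      simpa using pow_two_pow_eq_self_of_gcd_dvd (n := 2) hcard (h2k ▸ Nat.gcd_dvd_left 2 l)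
        ((iterateFrobenius_iterateFrobenius y).symm.trans (mem_filter.mp hy).2)
    have hW : #{v | σ v * v = d ∨ v = d} ≤ 1 := by
      have hv (v : L) (hv : σ v * v = d ∨ v = d) : v = d := hv.resolve_left fun h =>
        hno ⟨v, by rintro rfl; simp [eq_comm, hd] at h, (pow_succ v _).trans h⟩
      exact card_le_one.mpr fun a ha b hb =>
        (hv a (mem_filter.mp ha).2).trans (hv b (mem_filter.mp hb).2).symm
    omega

lemma card_filter_eq_numRoots_iterateFrobenius (c : L) :
    #{x | x ^ (2 ^ k + 1) + x + c = 0} =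
      ProjectivePolynomial.numRoots (iterateFrobenius L 2 k) c := by
  rw [ProjectivePolynomial.numRoots]
  exact congrArg card (filter_congr fun x _ => by
    rw [ProjectivePolynomial.projPoly, iterateFrobenius_def, pow_succ, CharTwo.add_eq_zero])

end FiniteFieldOfCharTwo

open ProjectivePolynomial in
theorem dI3_intersects_general (k l : ℕ) (hl : 3 < l) (hgcd : Nat.gcd k l = 1)
    (L : Type) [Field L] [Fintype L] [DecidableEq L] (hcard : Fintype.card L = 2 ^ l)
    (d : L) (hd : d ≠ 0)
    (hcase : Odd l ∨ (Even l ∧ ¬∃ z : L, z ≠ 0 ∧ z ^ (2 ^ k + 1) = d)) :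
    ∃ b : L,
      (Finset.univ.filter fun x : L => x ^ (2 ^ k + 1) + x + b = 0).card = 3 ∧
      (Finset.univ.filter fun x : L => x ^ (2 ^ k + 1) + x + d * b = 0).card ∈
        ({1, 2, 3} : Set ℕ) := by
  have : CharP L 2 := charP_of_card_eq_prime_pow hcard
  have hσ := eq_zero_or_one_of_iterateFrobenius_eq_self hcard hgcd
  have hsmall := card_fixedPoints_add_six_mul_lt hl hcard hgcd hd (hcase.imp_right And.right)
  have hL := card_le_card_fixedPoints_add hσ
  simp only [card_filter_eq_numRoots_iterateFrobenius]
  by_contra! h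
  have h3 (b : L) (hb : numRoots (iterateFrobenius L 2 k) b = 3) :
      numRoots (iterateFrobenius L 2 k) (d * b) = 0 := by
    have hdb := h b hb
    have := numRoots_le_three hσ (d * b)
    simp only [Set.mem_insert_iff, Set.mem_singleton_iff] at hdb
    omega
  rcases eq_or_ne d 1 with rfl | hd1
  · have : #{b | numRoots (iterateFrobenius L 2 k) b = 3} = 0 :=
      card_eq_zero.mpr (filter_eq_empty_iff.mpr fun b _ hb => by simpa [hb] using h3 b hb)
    omega
  · have := card_numRoots_eq_three_le hσ hd hd1 h3
    omega

/-- Let L = F_{2^l}, l > 3, q = 2^k, gcd(k,l) = 1, and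
I_j = {b ∈ L : x^{q+1}+x+b has exactly j roots in L}. For every d ∈ L^× (if l is
odd), resp. every d ∈ L^× that is not a (q+1)-th power (if l is even), the sets
d·I_3 and I_1 ∪ I_2 ∪ I_3 intersect nontrivially. -/
theorem dI3_intersects (k l : ℕ) (hk : 0 < k) (hl : 3 < l) (hgcd : Nat.gcd k l = 1)
    (L : Type) [Field L] [Fintype L] [DecidableEq L] (hcard : Fintype.card L = 2 ^ l)
    (d : L) (hd : d ≠ 0)
    (hcase : Odd l ∨ (Even l ∧ ¬∃ z : L, z ≠ 0 ∧ z ^ (2 ^ k + 1) = d)) :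
    ∃ b : L,
      (Finset.univ.filter fun x : L => x ^ (2 ^ k + 1) + x + b = 0).card = 3 ∧
      (Finset.univ.filter fun x : L => x ^ (2 ^ k + 1) + x + d * b = 0).card ∈
        ({1, 2, 3} : Set ℕ) :=
  dI3_intersects_general k l hl hgcd L hcard d hd hcase
end

section
/- Let L = F_{2^l} with l odd, q = 2^k, gcd(k,l) = 1, and c, d ∈ L with Tr_{L/F_2}(c) = 1, d ≠ 0. If the map φ(x) = (x^{q+1} + d)/(x^q + x + c) is injective on L (note x^q + x + c never vanishes on L since Tr(c)=1), then c = 1 and d = 1. -/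
/-!
Write `Tr = partialTrace l`, `T = partialTrace k`, `K = ker Tr` and `m = x² + x`. Since
`x^q + x = T m`, we get `φ x = x + (m + (1 + c) x + d) / (T m + c)`, and the denominator never
vanishes because `Tr (T m + c) = T (Tr m) + 1 = 1`. The map `x ↦ m` is two-to-one from `L` onto
`K`, and `T` permutes `K`: a `δ ∈ K` with `T δ = 0` satisfies `δ^(2^k) = δ`, so `δ ∈ 𝔽₂` as
`gcd (k, l) = 1`, and `δ ≠ 1` because `Tr 1 = l = 1`. Hence `∑_L G = ∑_K g` whenever
`G x + G (x + 1) = g m`.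

As `φ` permutes `L`, comparing `∑ φ` with `∑ x` gives `(1 + c) ∑_{s ∈ K} (s + c)⁻¹ = 0`, and
this sum is `∑_{Tr w = 1} w⁻¹ = ∑_w Tr w · w⁻¹ = 1`; so `c = 1`. Then `φ x = x + h m` with
`h m = (m + d) / (T m + 1)`, and comparing `∑ ψ ∘ φ` with `∑ ψ` for `ψ y = y² (y + 1)`, which
satisfies `ψ y + ψ (y + 1) = y² + y`, gives `∑_K (h + h²) = 0`. Since squaring permutes `K`, this sum is `d + d²`, so `d = 1`.
-/

open Finset

theorem Finset.sum_comp_eq_of_mapsTo_of_injOn {α M : Type*} [AddCommMonoid M] {s : Finset α}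
    {e : α → α} (hm : Set.MapsTo e s s) (hi : Set.InjOn e s) (f : α → M) :
    ∑ x ∈ s, f (e x) = ∑ x ∈ s, f x :=
  sum_nbij e hm hi (surjOn_of_injOn_of_card_le e hm hi le_rfl) fun _ _ => rfl

namespace CharTwo

variable {L : Type*} [Field L] [CharP L 2]

theorem sq_add_self_eq_sq_add_self_iff {x y : L} :
    y ^ 2 + y = x ^ 2 + x ↔ y = x ∨ y = x + 1 := by
  constructor
  · intro h
    have : (y + x) * (y + x + 1) = 0 := by grind
    rcases mul_eq_zero.1 this with h | h
    · exact .inl (by grind)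
    · exact .inr (by grind)
  · rintro (rfl | rfl) <;> grind

/-- `x + x^2 + x^4 + ⋯ + x^(2^(n-1))`; for `L = 𝔽_(2^l)` and `n = l` this is the absolute
trace of `L` over `𝔽₂`. -/
def partialTrace (n : ℕ) : L →+ L :=
  ∑ j ∈ range n, (iterateFrobenius L 2 j).toAddMonoidHom

theorem partialTrace_apply (n : ℕ) (x : L) : partialTrace n x = ∑ j ∈ range n, x ^ 2 ^ j := by
  simp [partialTrace, iterateFrobenius_def]

theorem partialTrace_pow_two_pow (n i : ℕ) (x : L) :
    partialTrace n (x ^ 2 ^ i) = partialTrace n x ^ 2 ^ i := by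
  rw [partialTrace_apply, partialTrace_apply, sum_pow_char_pow]
  simp only [← pow_mul, mul_comm]

theorem partialTrace_comm (m n : ℕ) (x : L) :
    partialTrace m (partialTrace n x) = partialTrace n (partialTrace m x) := by
  rw [partialTrace_apply n, map_sum, partialTrace_apply n]
  simp only [partialTrace_pow_two_pow]

theorem partialTrace_sq_add_self (n : ℕ) (x : L) :
    partialTrace n (x ^ 2 + x) = x ^ 2 ^ n + x := by
  have telescope := sum_range_sub (fun j => x ^ 2 ^ j) n
  simp only [CharTwo.sub_eq_add, pow_zero, pow_one] at telescope
  rw [← telescope, map_add, partialTrace_apply, partialTrace_apply, ← sum_add_distrib]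
  exact sum_congr rfl fun j _ => by rw [← pow_mul, pow_succ']

theorem partialTrace_sq (n : ℕ) (x : L) : partialTrace n (x ^ 2) = partialTrace n x ^ 2 := by
  simpa using partialTrace_pow_two_pow n 1 x

theorem partialTrace_one_of_odd {n : ℕ} (hn : Odd n) : partialTrace n (1 : L) = 1 := by
  simp [partialTrace_apply, CharTwo.natCast_eq_ite, Nat.not_even_iff_odd.2 hn]

theorem div_eq_add_div_partialTrace {k : ℕ} {x c d : L} (hD : x ^ 2 ^ k + x + c ≠ 0) :
    (x ^ (2 ^ k + 1) + d) / (x ^ 2 ^ k + x + c)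
      = x + (x ^ 2 + x + (1 + c) * x + d) / (partialTrace k (x ^ 2 + x) + c) := by
  rw [partialTrace_sq_add_self, add_div' _ _ _ hD]
  congr 1
  grind

section Finite

open scoped Classical

variable [Fintype L]

theorem filter_sq_add_self_eq (x : L) :
    (univ.filter fun y => y ^ 2 + y = x ^ 2 + x) = {x, x + 1} := by
  ext y
  simp [sq_add_self_eq_sq_add_self_iff]

theorem sum_eq_sum_image_sq_add_self {M : Type*} [AddCommMonoid M] {G g : L → M}
    (hG : ∀ x, G x + G (x + 1) = g (x ^ 2 + x)) :
    ∑ x, G x = ∑ m ∈ univ.image (fun x => x ^ 2 + x), g m := by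
  refine (sum_image' G fun x _ => ?_).symm
  rw [filter_sq_add_self_eq, sum_pair (by simp), hG]

variable (L) in
noncomputable def traceKer (l : ℕ) : Finset L := {x | partialTrace l x = 0}

variable {l : ℕ}

@[simp]
theorem mem_traceKer {x : L} : x ∈ traceKer L l ↔ partialTrace l x = 0 := by
  simp [traceKer]

theorem mapsTo_partialTrace_traceKer (k : ℕ) :
    Set.MapsTo (partialTrace k) (traceKer L l : Set L) (traceKer L l : Set L) := fun m hm => by
  simp_all [partialTrace_comm l k]

variable (hcard : Fintype.card L = 2 ^ l)
include hcard

omit [CharP L 2] in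
theorem pow_two_pow_eq_self (x : L) : x ^ 2 ^ l = x :=
  hcard ▸ FiniteField.pow_card x

theorem partialTrace_sq_add_self_eq_zero (x : L) : partialTrace l (x ^ 2 + x) = 0 := by
  rw [partialTrace_sq_add_self, pow_two_pow_eq_self hcard, CharTwo.add_self_eq_zero]

theorem partialTrace_sq_eq_self (x : L) : partialTrace l (x ^ 2) = partialTrace l x := by
  simpa [CharTwo.add_eq_zero] using partialTrace_sq_add_self_eq_zero hcard x

theorem partialTrace_eq_zero_or_eq_one (x : L) : partialTrace l x = 0 ∨ partialTrace l x = 1 :=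
  eq_zero_or_one_of_sq_eq_self <| by rw [← partialTrace_sq, partialTrace_sq_eq_self hcard]

theorem image_sq_add_self_eq_traceKer {c : L} (hc : partialTrace l c = 1) :
    univ.image (fun x => x ^ 2 + x) = traceKer L l := by
  have hsub : univ.image (fun x => x ^ 2 + x) ⊆ traceKer L l := by
    simp [subset_iff, partialTrace_sq_add_self_eq_zero hcard]
  refine eq_of_subset_of_card_le hsub ?_
  have hdisj : Disjoint (traceKer L l) ((traceKer L l).image (· + c)) := by
    simp +contextual [disjoint_left, hc]
  have hker : 2 * #(traceKer L l) ≤ Fintype.card L := by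
    rw [two_mul]
    nth_rewrite 2 [← card_image_of_injective _ (add_left_injective c)]
    rw [← card_union_of_disjoint hdisj]
    exact card_le_univ _
  have himage : Fintype.card L ≤ 2 * #(univ.image fun x : L => x ^ 2 + x) := by
    refine card_le_mul_card_image univ 2 fun m hm => ?_
    obtain ⟨x, -, rfl⟩ := mem_image.1 hm
    rw [filter_sq_add_self_eq]
    exact card_le_two
  omega

theorem sum_eq_sum_traceKer {M : Type*} [AddCommMonoid M] {c : L} (hc : partialTrace l c = 1)
    {G g : L → M} (hG : ∀ x, G x + G (x + 1) = g (x ^ 2 + x)) :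
    ∑ x, G x = ∑ m ∈ traceKer L l, g m := by
  rw [sum_eq_sum_image_sq_add_self hG, image_sq_add_self_eq_traceKer hcard hc]

theorem eq_zero_or_eq_one_of_pow_two_pow_eq_self {k : ℕ} (hgcd : k.gcd l = 1) {x : L}
    (hx : x ^ 2 ^ k = x) : x = 0 ∨ x = 1 := by
  have hk : Function.IsPeriodicPt (frobenius L 2) k x := by
    rw [Function.IsPeriodicPt, Function.IsFixedPt, iterate_frobenius, hx]
  have hl : Function.IsPeriodicPt (frobenius L 2) l x := by
    rw [Function.IsPeriodicPt, Function.IsFixedPt, iterate_frobenius, pow_two_pow_eq_self hcard]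
  have h1 := hk.gcd hl
  rw [hgcd, Function.IsPeriodicPt, Function.IsFixedPt, iterate_frobenius, pow_one] at h1
  exact eq_zero_or_one_of_sq_eq_self h1

theorem injOn_partialTrace_traceKer (hodd : Odd l) {k : ℕ} (hgcd : k.gcd l = 1) :
    Set.InjOn (partialTrace k) (traceKer L l : Set L) := by
  intro x hx y hy hxy
  have hδ : partialTrace l (x + y) = 0 := by simp_all
  have hTδ : partialTrace k (x + y) = 0 := by rw [map_add, hxy, CharTwo.add_self_eq_zero]
  have hfix : (x + y) ^ 2 ^ k = x + y := by
    have := partialTrace_sq_add_self k (x + y)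
    rwa [map_add, partialTrace_sq, hTδ, zero_pow two_ne_zero, zero_add, eq_comm,
      CharTwo.add_eq_zero] at this
  rcases eq_zero_or_eq_one_of_pow_two_pow_eq_self hcard hgcd hfix with h | h
  · exact CharTwo.add_eq_zero.1 h
  · rw [h, partialTrace_one_of_odd hodd] at hδ
    exact absurd hδ one_ne_zero

theorem sum_partialTrace_mul_inv : ∑ x : L, partialTrace l x * x⁻¹ = 1 := by
  obtain ⟨n, rfl⟩ : ∃ n, l = n + 1 := Nat.exists_eq_add_one.2 <| by
    have := Fintype.one_lt_card (α := L)
    rw [hcard] at this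
    exact Nat.pos_of_ne_zero (Nat.one_lt_two_pow_iff.1 this)
  have hunit : ∑ x : L, x ^ 2 ^ 0 * x⁻¹ = 1 := by
    have h0 : ∑ x ∈ univ.erase (0 : L), x ^ 2 ^ 0 * x⁻¹ = ∑ x ∈ univ.erase (0 : L), (1 : L) :=
      sum_congr rfl fun x hx => by simp [ne_of_mem_erase hx]
    rw [sum_erase univ (by simp)] at h0
    rw [h0, sum_const, card_erase_of_mem (mem_univ 0), card_univ, nsmul_one,
      Nat.cast_pred Fintype.card_pos, FiniteField.cast_card_eq_zero, zero_sub, CharTwo.neg_eq]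
  have hvanish (j : ℕ) (hj : j < n) : ∑ x : L, x ^ 2 ^ (j + 1) * x⁻¹ = 0 := by
    have hlt : 2 ^ (j + 1) - 1 < Fintype.card L - 1 := by
      rw [hcard]
      exact Nat.sub_lt_sub_right Nat.one_le_two_pow
        (Nat.pow_lt_pow_right (by norm_num) (by omega))
    rw [← FiniteField.sum_pow_lt_card_sub_one L _ hlt]
    refine sum_congr rfl fun x _ => ?_
    rcases eq_or_ne x 0 with rfl | hx
    · rw [zero_pow (by positivity), zero_mul, zero_pow]
      exact Nat.sub_ne_zero_of_lt (Nat.one_lt_two_pow j.succ_ne_zero)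
    · rw [pow_sub₀ x hx Nat.one_le_two_pow, pow_one]
  simp only [partialTrace_apply, sum_mul]
  rw [sum_comm, sum_range_succ', sum_eq_zero fun j hj => hvanish j (mem_range.1 hj), hunit,
    zero_add]

theorem sum_traceKer_inv_add {c : L} (hc : partialTrace l c = 1) :
    ∑ s ∈ traceKer L l, (s + c)⁻¹ = 1 := by
  have hindicator (s : L) : (if partialTrace l s = 0 then (s + c)⁻¹ else 0)
      = partialTrace l (s + c) * (s + c)⁻¹ := by
    rw [map_add, hc]
    rcases partialTrace_eq_zero_or_eq_one hcard s with h | h <;>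
      simp [h, CharTwo.add_self_eq_zero]
  rw [traceKer, sum_filter, sum_congr rfl fun s _ => hindicator s]
  exact (Equiv.sum_comp (Equiv.addRight c) fun w => partialTrace l w * w⁻¹).trans
    (sum_partialTrace_mul_inv hcard)

theorem sum_traceKer_inv_partialTrace_add (hodd : Odd l) {k : ℕ} (hgcd : k.gcd l = 1) {c : L}
    (hc : partialTrace l c = 1) : ∑ m ∈ traceKer L l, (partialTrace k m + c)⁻¹ = 1 :=
  (sum_comp_eq_of_mapsTo_of_injOn (mapsTo_partialTrace_traceKer k)
    (injOn_partialTrace_traceKer hcard hodd hgcd) fun s => (s + c)⁻¹).trans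
    (sum_traceKer_inv_add hcard hc)

theorem sum_traceKer_comp_sq {M : Type*} [AddCommMonoid M] (f : L → M) :
    ∑ m ∈ traceKer L l, f (m ^ 2) = ∑ m ∈ traceKer L l, f m :=
  sum_comp_eq_of_mapsTo_of_injOn (fun m hm => by simp_all [partialTrace_sq_eq_self hcard])
    CharTwo.sq_injective.injOn f

theorem pow_two_pow_add_self_add_ne_zero (k : ℕ) {c : L} (hc : partialTrace l c = 1) (x : L) :
    x ^ 2 ^ k + x + c ≠ 0 := by
  intro h
  have := congrArg (partialTrace l) h
  rw [← partialTrace_sq_add_self, map_add, partialTrace_comm,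
    partialTrace_sq_add_self_eq_zero hcard, map_zero, zero_add, hc, map_zero] at this
  exact one_ne_zero this

theorem sum_traceKer_add_div_partialTrace_add_one (hodd : Odd l) {k : ℕ} (hgcd : k.gcd l = 1)
    (e : L) : ∑ m ∈ traceKer L l, (m + e) / (partialTrace k m + 1)
      = ∑ m ∈ traceKer L l, m / (partialTrace k m + 1) + e := by
  simp_rw [add_div, sum_add_distrib, div_eq_mul_inv e, ← mul_sum,
    sum_traceKer_inv_partialTrace_add hcard hodd hgcd (partialTrace_one_of_odd hodd), mul_one]

theorem denom_const_eq_one_of_injective (hodd : Odd l) {k : ℕ} (hgcd : k.gcd l = 1) {c d : L}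
    (hc : partialTrace l c = 1)
    (hinj : Function.Injective fun x : L => (x ^ (2 ^ k + 1) + d) / (x ^ 2 ^ k + x + c)) :
    c = 1 := by
  set φ := fun x : L => (x ^ (2 ^ k + 1) + d) / (x ^ 2 ^ k + x + c)
  have hpair (x : L) : φ x + φ (x + 1) = 1 + (1 + c) * (partialTrace k (x ^ 2 + x) + c)⁻¹ := by
    simp only [φ, div_eq_add_div_partialTrace (pow_two_pow_add_self_add_ne_zero hcard k hc _),
      show (x + 1) ^ 2 + (x + 1) = x ^ 2 + x by grind]
    grind
  have hsum : ∑ x, φ x = ∑ x, x :=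
    Fintype.sum_bijective φ hinj.bijective_of_finite _ _ fun _ => rfl
  rw [sum_eq_sum_traceKer hcard hc (g := fun m => 1 + (1 + c) * (partialTrace k m + c)⁻¹) hpair,
    sum_eq_sum_traceKer hcard hc (g := fun _ => 1) fun x => by grind, sum_add_distrib, ← mul_sum,
    sum_traceKer_inv_partialTrace_add hcard hodd hgcd hc, mul_one, add_eq_left] at hsum
  exact (CharTwo.add_eq_zero.1 hsum).symm

theorem numer_const_eq_one_of_injective (hodd : Odd l) {k : ℕ} (hgcd : k.gcd l = 1) {d : L}
    (hd : d ≠ 0)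
    (hinj : Function.Injective fun x : L => (x ^ (2 ^ k + 1) + d) / (x ^ 2 ^ k + x + 1)) :
    d = 1 := by
  have h1 : partialTrace l (1 : L) = 1 := partialTrace_one_of_odd hodd
  set φ := fun x : L => (x ^ (2 ^ k + 1) + d) / (x ^ 2 ^ k + x + 1)
  set h := fun m : L => (m + d) / (partialTrace k m + 1)
  have hφ (x : L) : φ x = x + h (x ^ 2 + x) := by
    simp only [φ, h, div_eq_add_div_partialTrace (pow_two_pow_add_self_add_ne_zero hcard k h1 _),
      CharTwo.add_self_eq_zero, zero_mul, add_zero]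
  set ψ := fun y : L => y ^ 2 * (y + 1)
  have hψ (y : L) : ψ y + ψ (y + 1) = y ^ 2 + y := by grind
  have hpair (x : L) :
      ψ (φ x) + ψ (φ (x + 1)) = x ^ 2 + x + (h (x ^ 2 + x) + h (x ^ 2 + x) ^ 2) := by
    rw [hφ, hφ, show (x + 1) ^ 2 + (x + 1) = x ^ 2 + x by grind]
    grind
  have hsum : ∑ x, ψ (φ x) = ∑ x, ψ x :=
    Fintype.sum_bijective φ hinj.bijective_of_finite _ _ fun _ => rfl
  have hsq : ∑ m ∈ traceKer L l, h m ^ 2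
      = ∑ m ∈ traceKer L l, (m + d ^ 2) / (partialTrace k m + 1) := by
    refine (sum_congr rfl fun m _ => ?_).trans
      (sum_traceKer_comp_sq hcard fun m => (m + d ^ 2) / (partialTrace k m + 1))
    simp only [h, div_pow, CharTwo.add_sq, partialTrace_sq, one_pow]
  rw [sum_eq_sum_traceKer hcard h1 (g := fun m => m + (h m + h m ^ 2)) hpair,
    sum_eq_sum_traceKer hcard h1 (g := fun m => m) hψ, sum_add_distrib, add_eq_left,
    sum_add_distrib, hsq, sum_traceKer_add_div_partialTrace_add_one hcard hodd hgcd,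
    sum_traceKer_add_div_partialTrace_add_one hcard hodd hgcd] at hsum
  refine (eq_zero_or_one_of_sq_eq_self ?_).resolve_left hd
  grind

end Finite

end CharTwo

theorem charP_two_of_card_eq_two_pow {L : Type*} [Field L] [Fintype L] {l : ℕ}
    (hcard : Fintype.card L = 2 ^ l) : CharP L 2 :=
  CharTwo.of_one_ne_zero_of_two_eq_zero one_ne_zero <| eq_zero_of_pow_eq_zero (n := l) <| by
    exact_mod_cast hcard ▸ FiniteField.cast_card_eq_zero L

open CharTwo in
theorem frac_injective_rigidity_general (k l : ℕ) (hlodd : Odd l)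
    (hgcd : Nat.gcd k l = 1)
    (L : Type) [Field L] [Fintype L] (hcard : Fintype.card L = 2 ^ l)
    (c d : L) (htr : (∑ j ∈ Finset.range l, c ^ 2 ^ j) = 1) (hd : d ≠ 0)
    (hinj : Function.Injective fun x : L =>
      (x ^ (2 ^ k + 1) + d) / (x ^ (2 ^ k) + x + c)) :
    c = 1 ∧ d = 1 := by
  have := charP_two_of_card_eq_two_pow hcard
  rw [← partialTrace_apply] at htr
  obtain rfl := denom_const_eq_one_of_injective hcard hlodd hgcd htr hinj
  exact ⟨rfl, numer_const_eq_one_of_injective hcard hlodd hgcd hd hinj⟩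

/-- Let L = F_{2^l}, l odd, q = 2^k, gcd(k,l) = 1, c, d ∈ L with Tr(c) = 1 and
d ≠ 0. If φ(x) = (x^{q+1}+d)/(x^q+x+c) is injective on L, then c = 1 and d = 1. -/
theorem frac_injective_rigidity (k l : ℕ) (hk : 0 < k) (hl : 0 < l) (hlodd : Odd l)
    (hgcd : Nat.gcd k l = 1)
    (L : Type) [Field L] [Fintype L] (hcard : Fintype.card L = 2 ^ l)
    (c d : L) (htr : (∑ j ∈ Finset.range l, c ^ 2 ^ j) = 1) (hd : d ≠ 0)
    (hinj : Function.Injective fun x : L =>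
      (x ^ (2 ^ k + 1) + d) / (x ^ (2 ^ k) + x + c)) :
    c = 1 ∧ d = 1 :=
  frac_injective_rigidity_general k l hlodd hgcd L hcard c d htr hd hinj
end

section
/- Let L = F_{2^l}, q = 2^k with gcd(k,l) > 1, and let F : L × L → L × L be given by F(x,y) = (f(x,y), g(x,y)) where f and g are q-biprojective polynomials (i.e., of the form a x^{q+1} + b x^q y + c x y^q + d y^{q+1}). Then F is not APN: there exist (a,b) ∈ (L × L) \ {(0,0)} and c ∈ L × L such that F(z) + F(z + (a,b)) = c has more than two solutions z ∈ L × L. -/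
lemma char_two_of_card (l : ℕ) (L : Type) [Field L] [Fintype L]
    (hcard : Fintype.card L = 2 ^ l) : CharP L 2 := by
  obtain ⟨n, hp, hc⟩ := FiniteField.card L (ringChar L)
  rw [hcard] at hc
  have hdvd : ringChar L ∣ 2 ^ l := hc ▸ dvd_pow_self _ (Nat.pos_of_ne_zero (by exact_mod_cast n.2.ne')).ne'
  have h2 : ringChar L = 2 :=
    (Nat.prime_dvd_prime_iff_eq hp Nat.prime_two).mp (hp.dvd_of_dvd_pow hdvd)
  exact h2 ▸ ringChar.charP L

lemma exists_subfield_elt (d l : ℕ) (hd : 2 ≤ d) (hl : 0 < l) (hdl : d ∣ l)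
    (L : Type) [Field L] [Fintype L] [DecidableEq L] (hcard : Fintype.card L = 2 ^ l) :
    ∃ s : L, s ≠ 0 ∧ s ≠ 1 ∧ s ^ (2 ^ d) = s := by
  obtain ⟨g, hg⟩ := IsCyclic.exists_ofOrder_eq_natCard (α := Lˣ)
  have hcardu : Nat.card Lˣ = 2 ^ l - 1 := by
    rw [Nat.card_eq_fintype_card, Fintype.card_units, hcard]
  rw [hcardu] at hg
  have hdl' : (2 : ℕ) ^ d - 1 ∣ 2 ^ l - 1 := by
    obtain ⟨m, rfl⟩ := hdl
    rw [pow_mul]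
    simpa using Nat.sub_dvd_pow_sub_pow (2 ^ d) 1 m
  obtain ⟨m, hm⟩ := hdl'
  have h2d : 4 ≤ 2 ^ d := by
    calc (4:ℕ) = 2^2 := rfl
      _ ≤ 2^d := Nat.pow_le_pow_right (by norm_num) hd
  have h2l : 2 ^ d ≤ 2 ^ l := Nat.pow_le_pow_right (by norm_num) (Nat.le_of_dvd hl hdl)
  refine ⟨(g ^ m : Lˣ), Units.ne_zero _, ?_, ?_⟩
  · intro h
    have h1 : (g ^ m : Lˣ) = 1 := Units.ext h
    have hdvd : orderOf g ∣ m := orderOf_dvd_of_pow_eq_one h1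
    rw [hg] at hdvd
    have h3 : 3 ≤ 2 ^ d - 1 := by omega
    have h3m : 3 * m ≤ 2 ^ l - 1 := by
      calc 3 * m ≤ (2 ^ d - 1) * m := Nat.mul_le_mul_right m h3
        _ = 2 ^ l - 1 := hm.symm
    have hm0 : m ≠ 0 := by rintro rfl; simp at hm; omega
    have hm1 : m < 2 ^ l - 1 := by omega
    have := Nat.le_of_dvd (by omega) hdvd
    omega
  · have key : ((g : L) ^ m) ^ (2 ^ d - 1) = 1 := by
      have h1 : (g ^ m) ^ (2 ^ d - 1) = (1 : Lˣ) := by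
        rw [← pow_mul, mul_comm, ← hm, ← hg, pow_orderOf_eq_one]
      simpa using congrArg Units.val h1
    push_cast
    calc ((g:L) ^ m) ^ 2 ^ d = ((g:L)^m) ^ (2^d - 1) * ((g:L)^m) := by
          rw [← pow_succ]; congr 1; omega
      _ = (g:L)^m := by rw [key, one_mul]

/-- Let L = F_{2^l}, q = 2^k with 0 < k < l and gcd(k,l) > 1, and let
F(x,y) = (f(x,y), g(x,y)) where f, g are q-biprojective polynomials. Then F is
not APN: some nonzero difference (a,b) and some c yield more than two solutions
of F(z) + F(z+(a,b)) = c. -/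
theorem not_apn_of_gcd_gt_one (k l : ℕ) (hk : 0 < k) (hkl : k < l)
    (hgcd : 1 < Nat.gcd k l)
    (L : Type) [Field L] [Fintype L] [DecidableEq L] (hcard : Fintype.card L = 2 ^ l)
    (a₀ b₀ c₀ d₀ a₁ b₁ c₁ d₁ : L) :
    ∃ a b : L, (a, b) ≠ ((0 : L), (0 : L)) ∧ ∃ c : L × L,
      2 < ((Finset.univ : Finset (L × L)).filter fun z =>
        (fun w : L × L =>
          ((a₀ * w.1 ^ (2 ^ k + 1) + b₀ * w.1 ^ (2 ^ k) * w.2 +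
              c₀ * w.1 * w.2 ^ (2 ^ k) + d₀ * w.2 ^ (2 ^ k + 1)),
           (a₁ * w.1 ^ (2 ^ k + 1) + b₁ * w.1 ^ (2 ^ k) * w.2 +
              c₁ * w.1 * w.2 ^ (2 ^ k) + d₁ * w.2 ^ (2 ^ k + 1)))) z +
        (fun w : L × L =>
          ((a₀ * w.1 ^ (2 ^ k + 1) + b₀ * w.1 ^ (2 ^ k) * w.2 +
              c₀ * w.1 * w.2 ^ (2 ^ k) + d₀ * w.2 ^ (2 ^ k + 1)),
           (a₁ * w.1 ^ (2 ^ k + 1) + b₁ * w.1 ^ (2 ^ k) * w.2 +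
              c₁ * w.1 * w.2 ^ (2 ^ k) + d₁ * w.2 ^ (2 ^ k + 1)))) (z + (a, b)) = c).card := by
  have hchar : CharP L 2 := char_two_of_card l L hcard
  have h2 : (2 : L) = 0 := by exact_mod_cast hchar.cast_eq_zero
  set d := Nat.gcd k l with hd
  obtain ⟨s, hs0, hs1, hsd⟩ := exists_subfield_elt d l hgcd (by omega)
    (Nat.gcd_dvd_right k l) L hcard
  -- s is fixed by x ↦ x^(2^k)
  have hsk : s ^ (2 ^ k) = s := by
    obtain ⟨m, hm⟩ := Nat.gcd_dvd_left k l
    rw [hm, pow_mul]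
    clear hm
    induction m with
    | zero => simp
    | succ n ih => rw [pow_succ, pow_mul, ih, hsd]
  refine ⟨1, 0, by simp, (a₀, a₁), ?_⟩
  rw [Finset.two_lt_card]
  have hmem : ∀ t : L, t ^ (2 ^ k) = t →
      ((t, (0:L)) ∈ (Finset.univ : Finset (L × L)).filter fun z =>
        (fun w : L × L =>
          ((a₀ * w.1 ^ (2 ^ k + 1) + b₀ * w.1 ^ (2 ^ k) * w.2 +
              c₀ * w.1 * w.2 ^ (2 ^ k) + d₀ * w.2 ^ (2 ^ k + 1)),
           (a₁ * w.1 ^ (2 ^ k + 1) + b₁ * w.1 ^ (2 ^ k) * w.2 +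
              c₁ * w.1 * w.2 ^ (2 ^ k) + d₁ * w.2 ^ (2 ^ k + 1)))) z +
        (fun w : L × L =>
          ((a₀ * w.1 ^ (2 ^ k + 1) + b₀ * w.1 ^ (2 ^ k) * w.2 +
              c₀ * w.1 * w.2 ^ (2 ^ k) + d₀ * w.2 ^ (2 ^ k + 1)),
           (a₁ * w.1 ^ (2 ^ k + 1) + b₁ * w.1 ^ (2 ^ k) * w.2 +
              c₁ * w.1 * w.2 ^ (2 ^ k) + d₁ * w.2 ^ (2 ^ k + 1)))) (z + ((1:L), (0:L))) = (a₀, a₁)) := by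
    intro t ht
    rw [Finset.mem_filter]
    refine ⟨Finset.mem_univ _, ?_⟩
    have ht1 : (t + 1) ^ (2 ^ k) = t + 1 := by
      rw [add_pow_char_pow, ht, one_pow]
    simp only [Prod.mk_add_mk, Prod.fst, Prod.snd, add_zero, Prod.mk.injEq]
    rw [pow_succ, pow_succ, ht, ht1]
    have ht1' : (1 + t) ^ (2 ^ k) = t + 1 := by rw [add_comm]; exact ht1
    have hz : (0 : L) ^ (2 ^ k) = 0 := zero_pow (by positivity)
    rw [hz]
    constructor
    · linear_combination (a₀ * (t * t + t)) * h2 + (a₀ * t + a₀) * ht1'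
    · linear_combination (a₁ * (t * t + t)) * h2 + (a₁ * t + a₁) * ht1'
  refine ⟨(0, 0), hmem 0 (zero_pow (by positivity)), (1, 0), hmem 1 (one_pow _),
    (s, 0), hmem s hsk, ?_, ?_, ?_⟩
  · intro h; rw [Prod.mk.injEq] at h; exact one_ne_zero h.1.symm
  · intro h; rw [Prod.mk.injEq] at h; exact hs0 h.1.symm
  · intro h; rw [Prod.mk.injEq] at h; exact hs1 h.1.symm
end

section
/- Let L = F_{2^l}, q = 2^k, and let f(x,y) = x^{q+1} + b x^q y + c x y^q + d y^{q+1} be a q-biprojective polynomial with leading coefficient 1, and suppose the univariate polynomial f(x,1) has a root r ∈ L. Then f(x,1) is, up to the action of translation by r, reciprocation, and scaling, equivalent to an affine q-polynomial of degree less than q+1; in particular the number of roots of f(x,1) in L equals 1 plus the number of roots in L of (r+1)^q x^q + r x + 1 (after the substitution x ↦ x + r and reciprocation). -/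
/-!
Translating by the root `r` kills the constant term, and additivity of the Frobenius `x ↦ x ^ q`
turns `f (x + r)` into `x ^ (q + 1) + r x ^ q + (r + 1) ^ q x`. This has the root `0`, and its
nonzero roots are exactly the inverses of the roots of the reciprocal `(r + 1) ^ q x ^ q + r x + 1`,
which does not vanish at `0`.
-/

open Finset

theorem add_pow_expChar_pow_succ_add_of_root {R : Type*} [CommRing R] (p n : ℕ) [ExpChar R p]
    {d r : R} (hr : r ^ (p ^ n + 1) + r + d = 0) (x : R) :
    (x + r) ^ (p ^ n + 1) + (x + r) + d = x ^ (p ^ n + 1) + r * x ^ p ^ n + (r + 1) ^ p ^ n * x := by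
  rw [pow_succ, pow_succ, add_pow_expChar_pow, add_pow_expChar_pow, one_pow]
  linear_combination hr

theorem pow_succ_add_mul_pow_add_mul_eq_zero_iff {K : Type*} [Field K] (q : ℕ) (b c : K) {x : K}
    (hx : x ≠ 0) :
    x ^ (q + 1) + b * x ^ q + c * x = 0 ↔ c * x⁻¹ ^ q + b * x⁻¹ + 1 = 0 := by
  have hfactor : x ^ (q + 1) + b * x ^ q + c * x = x ^ (q + 1) * (c * x⁻¹ ^ q + b * x⁻¹ + 1) := by
    rw [inv_pow]
    field_simp
    ring
  rw [hfactor, mul_eq_zero, or_iff_right (pow_ne_zero _ hx)]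

theorem card_filter_eq_one_add_card_filter_inv {G : Type*} [GroupWithZero G] [Fintype G]
    [DecidableEq G] {P Q : G → Prop} [DecidablePred P] [DecidablePred Q] (hP : P 0) (hQ : ¬Q 0)
    (hPQ : ∀ x, x ≠ 0 → (P x ↔ Q x⁻¹)) :
    #(univ.filter P) = 1 + #(univ.filter Q) := by
  rw [← card_erase_add_one (mem_filter.2 ⟨mem_univ _, hP⟩), add_comm]
  congr 1
  refine card_equiv (Equiv.inv G) fun x => ?_
  rcases eq_or_ne x 0 with rfl | hx
  · simp [hQ]
  · simp [hx, hPQ x hx]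

theorem root_count_via_reciprocal_general (k l : ℕ)
    (L : Type) [Field L] [Fintype L] [DecidableEq L] (hcard : Fintype.card L = 2 ^ l)
    (d r : L) (hr : r ^ (2 ^ k + 1) + r + d = 0) :
    (∀ x : L, (x + r) ^ (2 ^ k + 1) + (x + r) + d =
        x ^ (2 ^ k + 1) + r * x ^ (2 ^ k) + (r + 1) ^ (2 ^ k) * x) ∧
    (Finset.univ.filter fun x : L => x ^ (2 ^ k + 1) + x + d = 0).card =
      1 + (Finset.univ.filter fun x : L =>
        (r + 1) ^ (2 ^ k) * x ^ (2 ^ k) + r * x + 1 = 0).card := by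
  have : CharP L 2 := charP_of_card_eq_prime_pow hcard
  have htranslate := add_pow_expChar_pow_succ_add_of_root 2 k hr
  refine ⟨htranslate, ?_⟩
  calc #(univ.filter fun x : L => x ^ (2 ^ k + 1) + x + d = 0)
      = #(univ.filter fun x : L => x ^ (2 ^ k + 1) + r * x ^ 2 ^ k + (r + 1) ^ 2 ^ k * x = 0) :=
        (card_equiv (Equiv.addRight r) fun x => by simp [htranslate]).symm
    _ = _ := card_filter_eq_one_add_card_filter_inv (by simp) (by simp)
        fun x hx => pow_succ_add_mul_pow_add_mul_eq_zero_iff _ _ _ hx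

/-- Let L = F_{2^l}, q = 2^k, f(x) = x^{q+1} + x + d with a root r ∈ L. Then
f(x+r) = x^{q+1} + r x^q + (r+1)^q x, and the number of roots of f in L equals
1 plus the number of roots in L of (r+1)^q x^q + r x + 1 (obtained by
translation by r and reciprocation). -/
theorem root_count_via_reciprocal (k l : ℕ) (hk : 0 < k) (hl : 0 < l)
    (L : Type) [Field L] [Fintype L] [DecidableEq L] (hcard : Fintype.card L = 2 ^ l)
    (d r : L) (hr : r ^ (2 ^ k + 1) + r + d = 0) :
    (∀ x : L, (x + r) ^ (2 ^ k + 1) + (x + r) + d =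
        x ^ (2 ^ k + 1) + r * x ^ (2 ^ k) + (r + 1) ^ (2 ^ k) * x) ∧
    (Finset.univ.filter fun x : L => x ^ (2 ^ k + 1) + x + d = 0).card =
      1 + (Finset.univ.filter fun x : L =>
        (r + 1) ^ (2 ^ k) * x ^ (2 ^ k) + r * x + 1 = 0).card :=
  root_count_via_reciprocal_general k l L hcard d r hr
end

section
/- Let L = F_{2^l} with l odd, and let G(x,y) = (x^{q+1} + x y^q + y^{q+1}, x^q y + x y^q) for q = 2^k with k odd and gcd(k,l) = 1. Then G is linearly equivalent over L (via identification of F_{2^{2l}} with L + Lξ where ξ generates F_4^×) to the Gold map X ↦ X^{q+1} on F_{2^{2l}}; in particular, writing X = x + yξ with ξ^2 = ξ + 1, one has X^{q+1} = (x^{q+1} + x y^q + y^{q+1}) + ξ(x^q y + x y^q). -/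
/-- Let M = F_{2^{2l}} with l odd, ξ ∈ M with ξ² + ξ + 1 = 0, q = 2^k with k odd
and gcd(k,l) = 1. Writing X = x + yξ, one has
X^{q+1} = (x^{q+1} + x y^q + y^{q+1}) + ξ(x^q y + x y^q); i.e. the biprojective
map G(x,y) = (x^{q+1} + xy^q + y^{q+1}, x^q y + x y^q) is the Gold map X ↦ X^{q+1}. -/
theorem gold_map_bivariate (k l : ℕ) (hk : 0 < k) (hkodd : Odd k) (hl : 0 < l)
    (hlodd : Odd l) (hgcd : Nat.gcd k l = 1)
    (M : Type) [Field M] [Fintype M] (hcard : Fintype.card M = 2 ^ (2 * l))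
    (ξ : M) (hξ : ξ ^ 2 + ξ + 1 = 0) :
    ∀ x y : M, (x + y * ξ) ^ (2 ^ k + 1) =
      (x ^ (2 ^ k + 1) + x * y ^ (2 ^ k) + y ^ (2 ^ k + 1)) +
        ξ * (x ^ (2 ^ k) * y + x * y ^ (2 ^ k)) := by
  have h2 : (2 : M) = 0 := by
    have h := FiniteField.cast_card_eq_zero M
    rw [hcard] at h
    push_cast at h
    exact pow_eq_zero_iff (by positivity) |>.mp h
  have hchar : ringChar M = 2 := by
    have hdvd : ringChar M ∣ 2 :=
      (CharP.cast_eq_zero_iff M (ringChar M) 2).mp (by exact_mod_cast h2)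
    refine ((Nat.dvd_prime Nat.prime_two).mp hdvd).resolve_left fun h1 => ?_
    have := CharP.cast_eq_zero M (ringChar M)
    rw [h1] at this
    simp at this
  haveI : CharP M 2 := hchar ▸ ringChar.charP M
  haveI : Fact (Nat.Prime 2) := ⟨Nat.prime_two⟩
  -- ξ^2 = ξ + 1
  have hsq : ξ ^ 2 = ξ + 1 := by linear_combination hξ - (ξ + 1) * h2
  -- ξ^(2^k) = ξ + 1 for odd k
  have h4 : ∀ j : ℕ, ξ ^ (2 ^ (2 * j)) = ξ := by
    intro j
    induction j with
    | zero => simp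
    | succ n ih =>
      have : (2 : ℕ) ^ (2 * (n + 1)) = 2 ^ (2 * n) * 2 * 2 := by ring
      rw [this, pow_mul, pow_mul, ih, hsq]
      linear_combination hξ
  obtain ⟨j, hj⟩ := hkodd
  have hfrobξ : ξ ^ (2 ^ k) = ξ + 1 := by
    rw [hj, pow_succ, pow_mul, h4 j, hsq]
  intro x y
  rw [pow_succ, add_pow_char_pow, mul_pow, hfrobξ]
  linear_combination (y ^ 2 ^ k * y) * hξ - (y ^ 2 ^ k * y) * h2
end
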